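/- arXiv:2005.02657 — 11 statements merged into one kernel-verified Lean document; each statement's English description precedes it below -/
import Mathlib

section
/- For all integers d, k ≥ 0 and all smooth functions f, g : ℝ → ℝ, one has, as an identity of functions on ℝ × (−1,1): {H_{d,f}, H_{k,g}} = H_{d+k−1, d·f·g′ − k·f′·g} + H_{d+k+1, (d−1)·f·g′ − (k−1)·f′·g}. -/
open Real

/-- `H d f` is the function `H_{d,f}(s,w) = f(s)·w^d·(1−w²)^((1−d)/2)` on `ℝ × (−1,1)`,
with the convention `H_{d,f} := 0` for `d < 0`. -/
noncomputable def H (d : ℤ) (f : ℝ → ℝ) (s w : ℝ) : ℝ :=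
  if d < 0 then 0 else f s * w ^ d.toNat * (1 - w ^ 2) ^ ((1 - (d : ℝ)) / 2)

/-- The Poisson bracket `{F,G} = ∂F/∂w·∂G/∂s − ∂F/∂s·∂G/∂w` of functions of `(s,w)`. -/
noncomputable def pb (F G : ℝ → ℝ → ℝ) (s w : ℝ) : ℝ :=
  deriv (fun w' => F s w') w * deriv (fun s' => G s' w) s
    - deriv (fun s' => F s' w) s * deriv (fun w' => G s w') w

/-- `{H_{d,f}, H_{k,g}} = H_{d+k−1, d·f·g′−k·f′·g} + H_{d+k+1, (d−1)·f·g′−(k−1)·f′·g}`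
on `ℝ × (−1,1)`. -/
theorem poisson_bracket_formula (d k : ℕ) (f g : ℝ → ℝ)
    (hf : ContDiff ℝ (⊤ : ℕ∞) f) (hg : ContDiff ℝ (⊤ : ℕ∞) g) :
    ∀ s : ℝ, ∀ w ∈ Set.Ioo (-1 : ℝ) 1,
      pb (H d f) (H k g) s w
        = H ((d : ℤ) + (k : ℤ) - 1)
            (fun s => (d : ℝ) * f s * deriv g s - (k : ℝ) * deriv f s * g s) s w
          + H ((d : ℤ) + (k : ℤ) + 1)
            (fun s => ((d : ℝ) - 1) * f s * deriv g s - ((k : ℝ) - 1) * deriv f s * g s) s w := by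
  intro s w hw
  obtain ⟨hw1, hw2⟩ := hw
  have hA : (0:ℝ) < 1 - w^2 := by nlinarith
  have hne : (1:ℝ) - w^2 ≠ 0 := hA.ne'
  have hfd : DifferentiableAt ℝ f s := (hf.differentiable (by simp)).differentiableAt
  have hgd : DifferentiableAt ℝ g s := (hg.differentiable (by simp)).differentiableAt
  -- the `s`-derivative of `H n h`
  have hs : ∀ (n : ℕ) (h : ℝ → ℝ), DifferentiableAt ℝ h s →
      deriv (fun s' => H n h s' w) s
        = deriv h s * w ^ n * (1 - w^2) ^ ((1-(n:ℝ))/2) := by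
    intro n h hh
    have : (fun s' => H n h s' w)
        = fun s' => h s' * (w ^ n * (1 - w^2) ^ ((1-(n:ℝ))/2)) := by
      funext s'
      simp [H, mul_assoc]
    rw [this, deriv_mul_const hh]
    ring
  -- the `w`-derivative of `H n h`
  have hwd : ∀ (n : ℕ) (h : ℝ → ℝ),
      deriv (fun w' => H n h s w') w
        = h s * ((n:ℝ) * w^(n-1) * (1-w^2)^((1-(n:ℝ))/2)
            + ((n:ℝ)-1) * w^(n+1) * ((1-w^2)^((1-(n:ℝ))/2) / (1-w^2))) := by
    intro n h
    have h1 : HasDerivAt (fun w' : ℝ => 1 - w'^2) (-(2*w)) w := by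
      simpa using ((hasDerivAt_pow 2 w).const_sub 1)
    have h2 : HasDerivAt (fun w' : ℝ => (1 - w'^2) ^ ((1-(n:ℝ))/2))
        (-(2*w) * ((1-(n:ℝ))/2) * (1-w^2) ^ ((1-(n:ℝ))/2 - 1)) w :=
      h1.rpow_const (Or.inl hA.ne')
    have h3 : HasDerivAt (fun w' : ℝ => w' ^ n * (1 - w'^2) ^ ((1-(n:ℝ))/2))
        ((n:ℝ) * w^(n-1) * (1-w^2) ^ ((1-(n:ℝ))/2)
          + w ^ n * (-(2*w) * ((1-(n:ℝ))/2) * (1-w^2) ^ ((1-(n:ℝ))/2 - 1))) w :=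
      (hasDerivAt_pow n w).mul h2
    have h4 : (fun w' => H n h s w')
        = fun w' => h s * (w' ^ n * (1 - w'^2) ^ ((1-(n:ℝ))/2)) := by
      funext w'
      simp [H, mul_assoc]
    rw [h4, deriv_const_mul _ h3.differentiableAt, h3.deriv]
    rw [Real.rpow_sub hA, Real.rpow_one]
    ring
  rw [pb, hs d f hfd, hs k g hgd, hwd d f, hwd k g]
  -- rewrite the two `H` values on the right-hand side
  have r2 : (1-w^2) ^ ((1 - ((((d:ℤ)+(k:ℤ)+1 : ℤ)) : ℝ))/2)
      = (1-w^2)^((1-(d:ℝ))/2) * (1-w^2)^((1-(k:ℝ))/2) / (1-w^2) := by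
    rw [show ((1 - ((((d:ℤ)+(k:ℤ)+1 : ℤ)) : ℝ))/2) = (1-(d:ℝ))/2 + (1-(k:ℝ))/2 - 1 by
      push_cast; ring, Real.rpow_sub hA, Real.rpow_add hA, Real.rpow_one]
  have hT2 : ((d:ℤ)+(k:ℤ)+1).toNat = d + k + 1 := by omega
  have hneg2 : ¬ ((d:ℤ)+(k:ℤ)+1 < 0) := by omega
  by_cases h0 : d + k = 0
  · have hneg1 : ((d:ℤ)+(k:ℤ)-1 < 0) := by omega
    obtain ⟨rfl, rfl⟩ : d = 0 ∧ k = 0 := by omega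
    rw [H, if_pos hneg1, H, if_neg hneg2, hT2, r2]
    push_cast
    field_simp
    ring
  · have hneg1 : ¬ ((d:ℤ)+(k:ℤ)-1 < 0) := by omega
    have hT1 : ((d:ℤ)+(k:ℤ)-1).toNat = d + k - 1 := by omega
    have r1 : (1-w^2) ^ ((1 - ((((d:ℤ)+(k:ℤ)-1 : ℤ)) : ℝ))/2)
        = (1-w^2)^((1-(d:ℝ))/2) * (1-w^2)^((1-(k:ℝ))/2) := by
      rw [show ((1 - ((((d:ℤ)+(k:ℤ)-1 : ℤ)) : ℝ))/2) = (1-(d:ℝ))/2 + (1-(k:ℝ))/2 by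
        push_cast; ring, Real.rpow_add hA]
    rw [H, if_neg hneg1, H, if_neg hneg2, hT1, hT2, r1, r2]
    have pw1 : (d:ℝ) * (w^(d-1) * w^k) = (d:ℝ) * w^(d+k-1) := by
      cases d with
      | zero => simp
      | succ n => rw [← pow_add]; norm_num
    have pw2 : (k:ℝ) * (w^(k-1) * w^d) = (k:ℝ) * w^(d+k-1) := by
      cases k with
      | zero => simp
      | succ n => rw [← pow_add, show n + 1 - 1 + d = d + (n+1) - 1 by omega]
    field_simp
    linear_combination (f s * deriv g s
        * (1-w^2)) * pw1
      - (deriv f s * g s * (1-w^2)) * pw2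
end

section
/- The Lie algebra generated by Λ₀ (the smallest ℝ-linear subspace of C^∞(ℝ × (−1,1)) containing Λ₀ and closed under the Poisson bracket) equals the set of all finite sums ∑_{k=0}^{K} H_{k,h_k} with h_k : ℝ → ℝ smooth; equivalently, it consists exactly of the functions (s,w) ↦ √(1−w²)·P(s, w/√(1−w²)) where P(s,y) is a polynomial in y whose coefficients are smooth functions of s. -/
open Real

lemma H_natCast (k : ℕ) (f : ℝ → ℝ) (s w : ℝ) :
    H (k : ℤ) f s w = f s * w ^ k * (1 - w ^ 2) ^ ((1 - (k : ℝ)) / 2) := by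
  simp [H]

lemma H_neg {d : ℤ} (hd : d < 0) (f : ℝ → ℝ) (s w : ℝ) : H d f s w = 0 := by
  simp [H, hd]

lemma H_coeff_zero (d : ℤ) (s w : ℝ) : H d (fun _ => 0) s w = 0 := by
  simp [H]

lemma H_coeff_congr {d : ℤ} {f g : ℝ → ℝ} (h : ∀ x, f x = g x) (s w : ℝ) :
    H d f s w = H d g s w := by
  simp [H, h s]

lemma H_coeff_add (d : ℤ) (f g : ℝ → ℝ) (s w : ℝ) :
    H d (fun x => f x + g x) s w = H d f s w + H d g s w := by
  simp [H]; split <;> ring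

lemma H_coeff_smul (d : ℤ) (c : ℝ) (f : ℝ → ℝ) (s w : ℝ) :
    H d (fun x => c * f x) s w = c * H d f s w := by
  simp [H]; split <;> ring

/-- value of ∂/∂w of `H d f` at points of the strip. -/
noncomputable def DW (d : ℤ) (f : ℝ → ℝ) (s w : ℝ) : ℝ :=
  if d < 0 then 0 else
    f s * ((d.toNat : ℝ) * w ^ (d.toNat - 1) * (1 - w ^ 2) ^ ((1 - (d : ℝ)) / 2)
      - (1 - (d : ℝ)) * w ^ (d.toNat + 1) * (1 - w ^ 2) ^ ((-1 - (d : ℝ)) / 2))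

lemma hasDerivAt_H_s (d : ℤ) (f : ℝ → ℝ) (hf : Differentiable ℝ f) (s w : ℝ) :
    HasDerivAt (fun s' => H d f s' w) (H d (deriv f) s w) s := by
  by_cases hd : d < 0
  · simp only [H_neg hd]
    exact hasDerivAt_const s 0
  · have : (fun s' => H d f s' w)
        = fun s' => f s' * (w ^ d.toNat * (1 - w ^ 2) ^ ((1 - (d : ℝ)) / 2)) := by
      funext s'; simp [H, hd, mul_assoc]
    rw [this]
    have h := ((hf s).hasDerivAt).mul_const (w ^ d.toNat * (1 - w ^ 2) ^ ((1 - (d : ℝ)) / 2))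
    simpa [H, hd, mul_assoc] using h

lemma hasDerivAt_H_w (d : ℤ) (f : ℝ → ℝ) (s w : ℝ) (hw : w ^ 2 < 1) :
    HasDerivAt (fun w' => H d f s w') (DW d f s w) w := by
  have hu : 0 < 1 - w ^ 2 := by nlinarith
  by_cases hd : d < 0
  · simp only [H_neg hd, DW, if_pos hd]
    exact hasDerivAt_const w 0
  · set k := d.toNat with hk
    have hdk : (d : ℝ) = (k : ℝ) := by
      rw [hk]; norm_cast; omega
    have h1 : HasDerivAt (fun w' : ℝ => 1 - w' ^ 2) (-(2 * w)) w := by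
      simpa using ((hasDerivAt_pow 2 w).const_sub 1)
    have h2 := h1.rpow_const (p := (1 - (d : ℝ)) / 2) (Or.inl hu.ne')
    have h3 := (hasDerivAt_pow k w).fun_mul h2
    have h4 := h3.const_mul (f s)
    have hfun : (fun w' => H d f s w')
        = fun w' => f s * (w' ^ k * (1 - w' ^ 2) ^ ((1 - (d : ℝ)) / 2)) := by
      funext w'; simp [H, hd, mul_assoc, hk]
    rw [hfun]
    refine h4.congr_deriv ?_
    rw [DW, if_neg hd]
    rw [show (1 - (d : ℝ)) / 2 - 1 = (-1 - (d : ℝ)) / 2 by ring]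
    rw [hdk]
    ring

lemma rpow_half_split (u : ℝ) (hu : 0 < u) (c : ℝ) (k : ℕ) :
    u ^ ((c - (k : ℝ)) / 2) = u ^ (c / 2) * ((u ^ ((1:ℝ)/2))⁻¹) ^ k := by
  have h1 : (u ^ ((1:ℝ)/2))⁻¹ = u ^ (-(1:ℝ)/2) := by
    rw [show (-(1:ℝ)/2) = -((1:ℝ)/2) by ring, Real.rpow_neg hu.le]
  rw [h1, ← Real.rpow_natCast (u ^ (-(1:ℝ)/2)) k, ← Real.rpow_mul hu.le, ← Real.rpow_add hu]
  ring_nf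

noncomputable def c1 (a b : ℤ) (f g : ℝ → ℝ) : ℝ → ℝ :=
  fun x => (a : ℝ) * f x * deriv g x - (b : ℝ) * deriv f x * g x

noncomputable def c2 (a b : ℤ) (f g : ℝ → ℝ) : ℝ → ℝ :=
  fun x => (1 - (b : ℝ)) * deriv f x * g x - (1 - (a : ℝ)) * f x * deriv g x

lemma DW_natCast (k : ℕ) (f : ℝ → ℝ) (s w : ℝ) :
    DW (k : ℤ) f s w = f s * ((k : ℝ) * w ^ (k - 1) * (1 - w ^ 2) ^ ((1 - (k : ℝ)) / 2)
      - (1 - (k : ℝ)) * w ^ (k + 1) * (1 - w ^ 2) ^ ((-1 - (k : ℝ)) / 2)) := by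
  simp [DW]

lemma key_alg (a b : ℕ) (f g : ℝ → ℝ) (s w : ℝ) (hw : w ^ 2 < 1) :
    DW (a : ℤ) f s w * H (b : ℤ) (deriv g) s w - H (a : ℤ) (deriv f) s w * DW (b : ℤ) g s w
      = H ((a : ℤ) + b - 1) (c1 a b f g) s w + H ((a : ℤ) + b + 1) (c2 a b f g) s w := by
  have hu : 0 < 1 - w ^ 2 := by nlinarith
  have hz : (0:ℝ) < (1 - w ^ 2) ^ ((1:ℝ)/2) := Real.rpow_pos_of_pos hu _
  have L1 : ∀ k : ℕ, (1 - w ^ 2) ^ ((1 - (k : ℝ)) / 2)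
      = (1 - w ^ 2) ^ ((1:ℝ)/2) * (((1 - w ^ 2) ^ ((1:ℝ)/2))⁻¹) ^ k := by
    intro k
    have h := rpow_half_split (1 - w ^ 2) hu 1 k
    rw [show ((1:ℝ)/2) = (1/2 : ℝ) by norm_num]
    exact h
  have L2 : ∀ k : ℕ, (1 - w ^ 2) ^ ((-1 - (k : ℝ)) / 2)
      = (((1 - w ^ 2) ^ ((1:ℝ)/2))⁻¹) * (((1 - w ^ 2) ^ ((1:ℝ)/2))⁻¹) ^ k := by
    intro k
    have h := rpow_half_split (1 - w ^ 2) hu (-1) k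
    rw [h, show ((-1:ℝ)/2) = -((1:ℝ)/2) by ring, Real.rpow_neg hu.le]
  set z := (1 - w ^ 2) ^ ((1:ℝ)/2) with hzdef
  rcases a with _ | a' <;> rcases b with _ | b'
  · -- a = 0, b = 0
    rw [show ((0:ℕ) : ℤ) + (0:ℕ) - 1 = (-1 : ℤ) by norm_num,
        show ((0:ℕ) : ℤ) + (0:ℕ) + 1 = ((1:ℕ) : ℤ) by norm_num]
    rw [H_natCast, H_natCast, H_natCast, DW_natCast, DW_natCast]
    have hneg : ∀ φ : ℝ → ℝ, H (-1 : ℤ) φ s w = 0 := fun φ => by simp [H]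
    rw [hneg]
    simp only [c1, c2, L1, L2]
    push_cast
    norm_num
    field_simp
    ring
  · -- a = 0, b = b'+1
    rw [show ((0:ℕ) : ℤ) + (b' + 1 : ℕ) - 1 = ((b' : ℕ) : ℤ) by push_cast; ring,
        show ((0:ℕ) : ℤ) + (b' + 1 : ℕ) + 1 = ((b' + 2 : ℕ) : ℤ) by push_cast; ring]
    rw [H_natCast, H_natCast, H_natCast, H_natCast, DW_natCast, DW_natCast]
    simp only [c1, c2, L1, L2, Nat.add_sub_cancel]
    push_cast
    simp only [inv_pow]; field_simp
    ring
  · -- a = a'+1, b = 0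
    rw [show ((a' + 1 : ℕ) : ℤ) + (0:ℕ) - 1 = ((a' : ℕ) : ℤ) by push_cast; ring,
        show ((a' + 1 : ℕ) : ℤ) + (0:ℕ) + 1 = ((a' + 2 : ℕ) : ℤ) by push_cast; ring]
    rw [H_natCast, H_natCast, H_natCast, H_natCast, DW_natCast, DW_natCast]
    simp only [c1, c2, L1, L2, Nat.add_sub_cancel]
    push_cast
    simp only [inv_pow]; field_simp
    ring
  · -- a = a'+1, b = b'+1
    rw [show ((a' + 1 : ℕ) : ℤ) + (b' + 1 : ℕ) - 1 = ((a' + b' + 1 : ℕ) : ℤ) by push_cast; ring,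
        show ((a' + 1 : ℕ) : ℤ) + (b' + 1 : ℕ) + 1 = ((a' + b' + 3 : ℕ) : ℤ) by push_cast; ring]
    rw [H_natCast, H_natCast, H_natCast, H_natCast, DW_natCast, DW_natCast]
    simp only [c1, c2, L1, L2, Nat.add_sub_cancel]
    push_cast
    simp only [inv_pow]; field_simp
    ring

lemma deriv_zero_fun : deriv (0 : ℝ → ℝ) = fun _ => (0 : ℝ) := by
  funext x
  exact deriv_const x 0

lemma pb_H_eq (a b : ℤ) (f g : ℝ → ℝ) (hf : Differentiable ℝ f) (hg : Differentiable ℝ g)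
    (s w : ℝ) (hw : w ^ 2 < 1) :
    pb (H a f) (H b g) s w
      = DW a f s w * H b (deriv g) s w - H a (deriv f) s w * DW b g s w := by
  rw [pb, (hasDerivAt_H_w a f s w hw).deriv, (hasDerivAt_H_s b g hg s w).deriv,
    (hasDerivAt_H_s a f hf s w).deriv, (hasDerivAt_H_w b g s w hw).deriv]

lemma pb_H_H (a b : ℤ) (f g : ℝ → ℝ) (hf : Differentiable ℝ f) (hg : Differentiable ℝ g)
    (ha : 0 ≤ a ∨ f = 0) (hb : 0 ≤ b ∨ g = 0) (s w : ℝ) (hw : w ^ 2 < 1) :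
    pb (H a f) (H b g) s w
      = H (a + b - 1) (c1 a b f g) s w + H (a + b + 1) (c2 a b f g) s w := by
  rw [pb_H_eq a b f g hf hg s w hw]
  rcases ha with ha | rfl
  · rcases hb with hb | rfl
    · lift a to ℕ using ha
      lift b to ℕ using hb
      exact key_alg a b f g s w hw
    · have e1 : c1 a b f (0 : ℝ → ℝ) = fun _ => 0 := by
        funext x; simp [c1, deriv_zero_fun]
      have e2 : c2 a b f (0 : ℝ → ℝ) = fun _ => 0 := by
        funext x; simp [c2, deriv_zero_fun]
      rw [e1, e2, H_coeff_zero, H_coeff_zero]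
      simp [H, DW, deriv_zero_fun]
  · have e1 : c1 a b (0 : ℝ → ℝ) g = fun _ => 0 := by
      funext x; simp [c1, deriv_zero_fun]
    have e2 : c2 a b (0 : ℝ → ℝ) g = fun _ => 0 := by
      funext x; simp [c2, deriv_zero_fun]
    rw [e1, e2, H_coeff_zero, H_coeff_zero]
    simp [H, DW, deriv_zero_fun]

/-! ### Lists of homogeneous terms -/

noncomputable def SumL (l : List (ℤ × (ℝ → ℝ))) : ℝ → ℝ → ℝ :=
  fun s w => (l.map (fun p => H p.1 p.2 s w)).sum

lemma sumL_cons (p : ℤ × (ℝ → ℝ)) (l : List (ℤ × (ℝ → ℝ))) (s w : ℝ) :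
    SumL (p :: l) s w = H p.1 p.2 s w + SumL l s w := by
  simp [SumL]

lemma hasDerivAt_sumL_s (l : List (ℤ × (ℝ → ℝ))) (hl : ∀ p ∈ l, Differentiable ℝ p.2)
    (s w : ℝ) :
    HasDerivAt (fun s' => SumL l s' w) ((l.map fun p => H p.1 (deriv p.2) s w).sum) s := by
  induction l with
  | nil => simpa [SumL] using hasDerivAt_const s (0 : ℝ)
  | cons p t ih =>
    have h1 := hasDerivAt_H_s p.1 p.2 (hl p (by simp)) s w
    have h2 := ih (fun q hq => hl q (by simp [hq]))
    simp only [List.map_cons, List.sum_cons, sumL_cons]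
    exact h1.add h2

lemma hasDerivAt_sumL_w (l : List (ℤ × (ℝ → ℝ))) (s w : ℝ) (hw : w ^ 2 < 1) :
    HasDerivAt (fun w' => SumL l s w') ((l.map fun p => DW p.1 p.2 s w).sum) w := by
  induction l with
  | nil => simpa [SumL] using hasDerivAt_const w (0 : ℝ)
  | cons p t ih =>
    have h1 := hasDerivAt_H_w p.1 p.2 s w hw
    simp only [List.map_cons, List.sum_cons, sumL_cons]
    exact h1.add ih

lemma list_sum_scale {β : Type*} (l : List β) (B D : β → ℝ) (x y : ℝ) :
    (l.map fun q => x * B q - y * D q).sum = x * (l.map B).sum - y * (l.map D).sum := by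
  induction l with
  | nil => simp
  | cons q t ih => simp [ih]; ring

lemma list_sum_mul_sub {α β : Type*} (l₁ : List α) (l₂ : List β)
    (A C : α → ℝ) (B D : β → ℝ) :
    (l₁.map A).sum * (l₂.map B).sum - (l₁.map C).sum * (l₂.map D).sum
      = (l₁.map fun p => (l₂.map fun q => A p * B q - C p * D q).sum).sum := by
  induction l₁ with
  | nil => simp
  | cons p t ih =>
    simp only [List.map_cons, List.sum_cons]
    rw [list_sum_scale l₂ B D (A p) (C p), ← ih]
    ring

lemma pb_sumL (l₁ l₂ : List (ℤ × (ℝ → ℝ))) (h₁ : ∀ p ∈ l₁, Differentiable ℝ p.2)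
    (h₂ : ∀ p ∈ l₂, Differentiable ℝ p.2) (s w : ℝ) (hw : w ^ 2 < 1) :
    pb (SumL l₁) (SumL l₂) s w
      = (l₁.map fun p => (l₂.map fun q => pb (H p.1 p.2) (H q.1 q.2) s w).sum).sum := by
  rw [pb, (hasDerivAt_sumL_w l₁ s w hw).deriv, (hasDerivAt_sumL_s l₂ h₂ s w).deriv,
    (hasDerivAt_sumL_s l₁ h₁ s w).deriv, (hasDerivAt_sumL_w l₂ s w hw).deriv,
    list_sum_mul_sub]
  refine congrArg List.sum (List.map_congr_left fun p hp => congrArg List.sum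
    (List.map_congr_left fun q hq => ?_))
  exact (pb_H_eq p.1 q.1 p.2 q.2 (h₁ p hp) (h₂ q hq) s w hw).symm

noncomputable def brL (l₁ l₂ : List (ℤ × (ℝ → ℝ))) : List (ℤ × (ℝ → ℝ)) :=
  l₁.flatMap fun p => l₂.flatMap fun q =>
    [(p.1 + q.1 - 1, c1 p.1 q.1 p.2 q.2), (p.1 + q.1 + 1, c2 p.1 q.1 p.2 q.2)]

lemma mem_brL {l₁ l₂ : List (ℤ × (ℝ → ℝ))} {r : ℤ × (ℝ → ℝ)} (hr : r ∈ brL l₁ l₂) :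
    ∃ p ∈ l₁, ∃ q ∈ l₂,
      r = (p.1 + q.1 - 1, c1 p.1 q.1 p.2 q.2) ∨ r = (p.1 + q.1 + 1, c2 p.1 q.1 p.2 q.2) := by
  simp only [brL, List.mem_flatMap, List.mem_cons, List.mem_singleton] at hr
  obtain ⟨p, hp, q, hq, h⟩ := hr
  exact ⟨p, hp, q, hq, by tauto⟩

lemma sumL_append (l₁ l₂ : List (ℤ × (ℝ → ℝ))) (s w : ℝ) :
    SumL (l₁ ++ l₂) s w = SumL l₁ s w + SumL l₂ s w := by
  simp [SumL]

lemma sumL_pair_flat (p : ℤ × (ℝ → ℝ)) (l₂ : List (ℤ × (ℝ → ℝ))) (s w : ℝ) :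
    SumL (l₂.flatMap fun q =>
        [(p.1 + q.1 - 1, c1 p.1 q.1 p.2 q.2), (p.1 + q.1 + 1, c2 p.1 q.1 p.2 q.2)]) s w
      = (l₂.map fun q => H (p.1 + q.1 - 1) (c1 p.1 q.1 p.2 q.2) s w
          + H (p.1 + q.1 + 1) (c2 p.1 q.1 p.2 q.2) s w).sum := by
  induction l₂ with
  | nil => simp [SumL]
  | cons q t₂ ih₂ =>
    simp only [List.flatMap_cons, List.map_cons, List.sum_cons]
    rw [← ih₂]
    simp only [List.cons_append, List.singleton_append, List.nil_append, sumL_cons]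
    ring

lemma sumL_brL (l₁ l₂ : List (ℤ × (ℝ → ℝ))) (s w : ℝ) :
    SumL (brL l₁ l₂) s w
      = (l₁.map fun p => (l₂.map fun q =>
          H (p.1 + q.1 - 1) (c1 p.1 q.1 p.2 q.2) s w
            + H (p.1 + q.1 + 1) (c2 p.1 q.1 p.2 q.2) s w).sum).sum := by
  induction l₁ with
  | nil => simp [brL, SumL]
  | cons p t ih =>
    have hsplit : brL (p :: t) l₂
        = (l₂.flatMap fun q =>
            [(p.1 + q.1 - 1, c1 p.1 q.1 p.2 q.2), (p.1 + q.1 + 1, c2 p.1 q.1 p.2 q.2)])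
          ++ brL t l₂ := by
      simp [brL]
    rw [hsplit, sumL_append, ih]
    simp only [List.map_cons, List.sum_cons]
    rw [sumL_pair_flat]

/-- The Lie algebra generated by `Λ₀ = {H_{0,f} | f smooth}` inside the functions on
`ℝ × (−1,1)`: the smallest ℝ-linear subspace containing `Λ₀` and closed under the Poisson
bracket. Since we represent functions on the strip `ℝ × (−1,1)` by globally defined
functions, membership is closed under modification outside of the strip (`congr`). -/
inductive LieGen : (ℝ → ℝ → ℝ) → Prop
  | base (f : ℝ → ℝ) (hf : ContDiff ℝ (⊤ : ℕ∞) f) : LieGen (H 0 f)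
  | add {F G : ℝ → ℝ → ℝ} : LieGen F → LieGen G → LieGen (F + G)
  | smul (c : ℝ) {F : ℝ → ℝ → ℝ} : LieGen F → LieGen (c • F)
  | bracket {F G : ℝ → ℝ → ℝ} : LieGen F → LieGen G → LieGen (pb F G)
  | congr {F G : ℝ → ℝ → ℝ} : LieGen F →
      (∀ s : ℝ, ∀ w ∈ Set.Ioo (-1 : ℝ) 1, F s w = G s w) → LieGen G

/-! ### smoothness helpers -/

lemma contDiff_deriv {f : ℝ → ℝ} (hf : ContDiff ℝ (⊤ : ℕ∞) f) : ContDiff ℝ (⊤ : ℕ∞) (deriv f) := by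
  exact (contDiff_infty_iff_deriv.1 hf).2

lemma contDiff_c1 (a b : ℤ) {f g : ℝ → ℝ} (hf : ContDiff ℝ (⊤ : ℕ∞) f) (hg : ContDiff ℝ (⊤ : ℕ∞) g) :
    ContDiff ℝ (⊤ : ℕ∞) (c1 a b f g) :=
  ((contDiff_const.mul hf).mul (contDiff_deriv hg)).sub
    ((contDiff_const.mul (contDiff_deriv hf)).mul hg)

lemma contDiff_c2 (a b : ℤ) {f g : ℝ → ℝ} (hf : ContDiff ℝ (⊤ : ℕ∞) f) (hg : ContDiff ℝ (⊤ : ℕ∞) g) :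
    ContDiff ℝ (⊤ : ℕ∞) (c2 a b f g) :=
  ((contDiff_const.mul (contDiff_deriv hf)).mul hg).sub
    ((contDiff_const.mul hf).mul (contDiff_deriv hg))

lemma c1_zero_left (a b : ℤ) (g : ℝ → ℝ) : c1 a b 0 g = 0 := by
  funext x; simp [c1, deriv_zero_fun]
lemma c1_zero_right (a b : ℤ) (f : ℝ → ℝ) : c1 a b f 0 = 0 := by
  funext x; simp [c1, deriv_zero_fun]
lemma c2_zero_left (a b : ℤ) (g : ℝ → ℝ) : c2 a b 0 g = 0 := by
  funext x; simp [c2, deriv_zero_fun]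
lemma c2_zero_right (a b : ℤ) (f : ℝ → ℝ) : c2 a b f 0 = 0 := by
  funext x; simp [c2, deriv_zero_fun]
lemma c1_zz (f g : ℝ → ℝ) : c1 0 0 f g = 0 := by
  funext x; simp [c1]

/-! ### pb congruence on the strip -/

lemma pb_congr {F F' G G' : ℝ → ℝ → ℝ}
    (hF : ∀ s : ℝ, ∀ w ∈ Set.Ioo (-1 : ℝ) 1, F s w = F' s w)
    (hG : ∀ s : ℝ, ∀ w ∈ Set.Ioo (-1 : ℝ) 1, G s w = G' s w)
    (s w : ℝ) (hw : w ∈ Set.Ioo (-1 : ℝ) 1) : pb F G s w = pb F' G' s w := by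
  have e1 : deriv (fun s' => F s' w) s = deriv (fun s' => F' s' w) s := by
    congr 1; funext s'; exact hF s' w hw
  have e2 : deriv (fun s' => G s' w) s = deriv (fun s' => G' s' w) s := by
    congr 1; funext s'; exact hG s' w hw
  have e3 : deriv (fun w' => F s w') w = deriv (fun w' => F' s w') w := by
    apply Filter.EventuallyEq.deriv_eq
    filter_upwards [Ioo_mem_nhds hw.1 hw.2] with x hx using hF s x hx
  have e4 : deriv (fun w' => G s w') w = deriv (fun w' => G' s w') w := by
    apply Filter.EventuallyEq.deriv_eq
    filter_upwards [Ioo_mem_nhds hw.1 hw.2] with x hx using hG s x hx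
  rw [pb, pb, e1, e2, e3, e4]

/-! ### representation predicate -/

def RepL (F : ℝ → ℝ → ℝ) : Prop :=
  ∃ l : List (ℤ × (ℝ → ℝ)), (∀ p ∈ l, ContDiff ℝ (⊤ : ℕ∞) p.2) ∧ (∀ p ∈ l, 0 ≤ p.1 ∨ p.2 = 0) ∧
    ∀ s : ℝ, ∀ w ∈ Set.Ioo (-1 : ℝ) 1, F s w = SumL l s w

lemma sumL_smul (c : ℝ) (l : List (ℤ × (ℝ → ℝ))) (s w : ℝ) :
    SumL (l.map fun p => (p.1, fun x => c * p.2 x)) s w = c * SumL l s w := by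
  induction l with
  | nil => simp [SumL]
  | cons p t ih =>
    rw [List.map_cons, sumL_cons, sumL_cons, ih, H_coeff_smul]
    ring

theorem lieGen_rep {F : ℝ → ℝ → ℝ} (h : LieGen F) : RepL F := by
  induction h with
  | base f hf =>
    refine ⟨[((0 : ℤ), f)], ?_, ?_, ?_⟩
    · intro p hp; simp at hp; subst hp; exact hf
    · intro p hp; simp at hp; subst hp; left; norm_num
    · intro s w _; rw [sumL_cons]; simp [SumL]
  | add hF hG ihF ihG =>
    obtain ⟨l₁, hs₁, hn₁, he₁⟩ := ihF
    obtain ⟨l₂, hs₂, hn₂, he₂⟩ := ihG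
    refine ⟨l₁ ++ l₂, ?_, ?_, ?_⟩
    · intro p hp; rcases List.mem_append.1 hp with h | h
      · exact hs₁ p h
      · exact hs₂ p h
    · intro p hp; rcases List.mem_append.1 hp with h | h
      · exact hn₁ p h
      · exact hn₂ p h
    · intro s w hw
      rw [sumL_append, ← he₁ s w hw, ← he₂ s w hw]
      rfl
  | smul c hF ih =>
    obtain ⟨l, hs, hn, he⟩ := ih
    refine ⟨l.map fun p => (p.1, fun x => c * p.2 x), ?_, ?_, ?_⟩
    · intro p hp
      obtain ⟨q, hq, rfl⟩ := List.mem_map.1 hp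
      exact contDiff_const.mul (hs q hq)
    · intro p hp
      obtain ⟨q, hq, rfl⟩ := List.mem_map.1 hp
      rcases hn q hq with h | h
      · left; exact h
      · right; funext x; simp [h]
    · intro s w hw
      rw [sumL_smul, ← he s w hw]
      rfl
  | bracket hF hG ihF ihG =>
    obtain ⟨l₁, hs₁, hn₁, he₁⟩ := ihF
    obtain ⟨l₂, hs₂, hn₂, he₂⟩ := ihG
    refine ⟨brL l₁ l₂, ?_, ?_, ?_⟩
    · intro r hr
      obtain ⟨p, hp, q, hq, hcase⟩ := mem_brL hr
      rcases hcase with rfl | rfl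
      · exact contDiff_c1 p.1 q.1 (hs₁ p hp) (hs₂ q hq)
      · exact contDiff_c2 p.1 q.1 (hs₁ p hp) (hs₂ q hq)
    · intro r hr
      obtain ⟨p, hp, q, hq, hcase⟩ := mem_brL hr
      rcases hcase with rfl | rfl
      · by_cases hd : 0 ≤ p.1 + q.1 - 1
        · left; exact hd
        · right
          rcases hn₁ p hp with h1 | h1
          · rcases hn₂ q hq with h2 | h2
            · have hp0 : p.1 = 0 := by omega
              have hq0 : q.1 = 0 := by omega
              rw [hp0, hq0]; exact c1_zz p.2 q.2
            · rw [h2]; exact c1_zero_right p.1 q.1 p.2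
          · rw [h1]; exact c1_zero_left p.1 q.1 q.2
      · by_cases hd : 0 ≤ p.1 + q.1 + 1
        · left; exact hd
        · right
          rcases hn₁ p hp with h1 | h1
          · rcases hn₂ q hq with h2 | h2
            · omega
            · rw [h2]; exact c2_zero_right p.1 q.1 p.2
          · rw [h1]; exact c2_zero_left p.1 q.1 q.2
    · intro s w hw
      have hw2 : w ^ 2 < 1 := by
        obtain ⟨hw1, hw2⟩ := hw; nlinarith
      have hd₁ : ∀ p ∈ l₁, Differentiable ℝ p.2 :=
        fun p hp => (hs₁ p hp).differentiable (by simp)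
      have hd₂ : ∀ p ∈ l₂, Differentiable ℝ p.2 :=
        fun p hp => (hs₂ p hp).differentiable (by simp)
      rw [pb_congr he₁ he₂ s w hw, pb_sumL l₁ l₂ hd₁ hd₂ s w hw2, sumL_brL]
      refine congrArg List.sum (List.map_congr_left fun p hp => congrArg List.sum
        (List.map_congr_left fun q hq => ?_))
      exact pb_H_H p.1 q.1 p.2 q.2 (hd₁ p hp) (hd₂ q hq) (hn₁ p hp) (hn₂ q hq) s w hw2
  | congr hF he ih =>
    obtain ⟨l, hs, hn, hel⟩ := ih
    exact ⟨l, hs, hn, fun s w hw => by rw [← he s w hw]; exact hel s w hw⟩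

/-- max degree bound -/
noncomputable def Kof (l : List (ℤ × (ℝ → ℝ))) : ℕ := (l.map (fun p => p.1.toNat)).foldr max 0

lemma le_Kof (l : List (ℤ × (ℝ → ℝ))) : ∀ p ∈ l, p.1.toNat ≤ Kof l := by
  induction l with
  | nil => simp
  | cons q t ih =>
    intro p hp
    have hK : Kof (q :: t) = max q.1.toNat (Kof t) := rfl
    rcases List.mem_cons.1 hp with rfl | hp
    · rw [hK]; exact le_max_left _ _
    · rw [hK]; exact le_trans (ih p hp) (le_max_right _ _)

lemma contDiff_list_sum {α : Type*} (l : List α) (φ : α → ℝ → ℝ)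
    (h : ∀ p ∈ l, ContDiff ℝ (⊤ : ℕ∞) (φ p)) :
    ContDiff ℝ (⊤ : ℕ∞) (fun x => (l.map (fun p => φ p x)).sum) := by
  induction l with
  | nil => simpa using contDiff_const (c := (0:ℝ))
  | cons p t ih =>
    simp only [List.map_cons, List.sum_cons]
    exact (h p (by simp)).add (ih fun q hq => h q (by simp [hq]))

lemma sum_range_of_list (l : List (ℤ × (ℝ → ℝ))) (K : ℕ)
    (hK : ∀ p ∈ l, p.1.toNat ≤ K) (hn : ∀ p ∈ l, 0 ≤ p.1 ∨ p.2 = 0) (s w : ℝ) :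
    ∑ k ∈ Finset.range (K + 1),
        H (k : ℤ) (fun x => (l.map (fun p => if p.1 = (k : ℤ) then p.2 x else 0)).sum) s w
      = SumL l s w := by
  induction l with
  | nil =>
    simp only [List.map_nil, List.sum_nil, SumL]
    exact Finset.sum_eq_zero fun k _ => H_coeff_zero _ s w
  | cons p t ih =>
    have step1 : ∑ k ∈ Finset.range (K + 1),
        H (k : ℤ) (fun x => (List.map (fun p => if p.1 = (k:ℤ) then p.2 x else 0) (p :: t)).sum) s w
        = ∑ k ∈ Finset.range (K + 1),
          (H (k : ℤ) (fun x => if p.1 = (k:ℤ) then p.2 x else 0) s w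
            + H (k : ℤ) (fun x => (List.map (fun p => if p.1 = (k:ℤ) then p.2 x else 0) t).sum) s w) := by
      refine Finset.sum_congr rfl fun k _ => ?_
      rw [← H_coeff_add]
      exact H_coeff_congr
        (f := fun x => (List.map (fun p => if p.1 = (k:ℤ) then p.2 x else 0) (p :: t)).sum)
        (g := fun x => (if p.1 = (k:ℤ) then p.2 x else 0)
          + (List.map (fun p => if p.1 = (k:ℤ) then p.2 x else 0) t).sum)
        (fun x => by simp) s w
    have step2 : ∑ k ∈ Finset.range (K + 1),
        H (k : ℤ) (fun x => if p.1 = (k:ℤ) then p.2 x else 0) s w = H p.1 p.2 s w := by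
      rcases hn p (by simp) with hp | hp
      · have hmem : p.1.toNat ∈ Finset.range (K + 1) := by
          simp [Nat.lt_succ_iff, hK p (by simp)]
        have hcast : ((p.1.toNat : ℕ) : ℤ) = p.1 := Int.toNat_of_nonneg hp
        have hsum := Finset.sum_eq_single_of_mem (f := fun k : ℕ =>
            H (k : ℤ) (fun x => if p.1 = (k : ℤ) then p.2 x else 0) s w) p.1.toNat hmem ?side
        case side =>
          intro k _ hk
          have hne : ¬ (p.1 = (k : ℤ)) := by
            intro hcon
            apply hk
            omega
          show H ((k:ℕ) : ℤ) (fun x => if p.1 = ((k:ℕ):ℤ) then p.2 x else 0) s w = 0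
          rw [H_coeff_congr (f := fun x => if p.1 = (k:ℤ) then p.2 x else 0)
            (g := fun _ => 0) (fun x => by simp [hne]) s w]
          exact H_coeff_zero _ s w
        rw [hsum]
        show H ((p.1.toNat : ℕ) : ℤ) (fun x => if p.1 = ((p.1.toNat : ℕ) : ℤ) then p.2 x else 0) s w
          = H p.1 p.2 s w
        rw [H_coeff_congr (f := fun x => if p.1 = ((p.1.toNat : ℕ) : ℤ) then p.2 x else 0)
          (g := p.2) (fun x => by simp [hcast]) s w, hcast]
      · have hterm : ∀ k ∈ Finset.range (K + 1),
            H ((k:ℕ) : ℤ) (fun x => if p.1 = ((k:ℕ) : ℤ) then p.2 x else 0) s w = 0 := by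
          intro k _
          rw [H_coeff_congr (f := fun x => if p.1 = (k:ℤ) then p.2 x else 0)
            (g := fun _ => 0) (fun x => by simp [hp]) s w]
          exact H_coeff_zero _ s w
        rw [Finset.sum_eq_zero hterm, hp,
          H_coeff_congr (f := (0 : ℝ → ℝ)) (g := fun _ => 0) (fun x => rfl) s w,
          H_coeff_zero]
    rw [step1, Finset.sum_add_distrib, step2,
      ih (fun q hq => hK q (by simp [hq])) (fun q hq => hn q (by simp [hq])), sumL_cons]

lemma exists_antideriv {h : ℝ → ℝ} (hh : ContDiff ℝ (⊤ : ℕ∞) h) :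
    ∃ g : ℝ → ℝ, ContDiff ℝ (⊤ : ℕ∞) g ∧ deriv g = h := by
  set F : ℝ → ℝ := fun x => ∫ t in (0:ℝ)..x, h t with hFdef
  have hF : ∀ x, HasDerivAt F (h x) x := fun x =>
    (hh.continuous.integral_hasStrictDerivAt 0 x).hasDerivAt
  refine ⟨F, ?_, funext fun x => (hF x).deriv⟩
  have hd : deriv F = h := funext fun x => (hF x).deriv
  exact contDiff_infty_iff_deriv.2 ⟨fun x => (hF x).differentiableAt, by rw [hd]; exact hh⟩

lemma lieGen_H : ∀ (k : ℕ) (f : ℝ → ℝ), ContDiff ℝ (⊤ : ℕ∞) f → LieGen (H (k : ℤ) f) := by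
  intro k
  induction k with
  | zero => exact fun f hf => LieGen.base f hf
  | succ k ih =>
    intro f hf
    obtain ⟨g, hg, hgd⟩ := exists_antideriv hf.neg
    have h1 : LieGen (H 0 (fun _ => (1:ℝ))) := LieGen.base _ contDiff_const
    have h2 : LieGen (H (k : ℤ) g) := ih g hg
    refine LieGen.congr (LieGen.bracket h1 h2) ?_
    intro s w hw
    have hw2 : w ^ 2 < 1 := by
      obtain ⟨h1', h2'⟩ := hw; nlinarith
    rw [pb_H_H 0 (k : ℤ) (fun _ => (1:ℝ)) g (differentiable_const 1)
      (hg.differentiable (by simp)) (Or.inl le_rfl) (Or.inl (by positivity)) s w hw2]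
    have e1 : H ((0 : ℤ) + k - 1) (c1 0 (k : ℤ) (fun _ => (1:ℝ)) g) s w = 0 := by
      rw [H_coeff_congr (f := c1 0 (k : ℤ) (fun _ => (1:ℝ)) g) (g := fun _ => 0)
        (fun x => by simp [c1]) s w]
      exact H_coeff_zero _ s w
    have e2 : H ((0 : ℤ) + k + 1) (c2 0 (k : ℤ) (fun _ => (1:ℝ)) g) s w
        = H ((k + 1 : ℕ) : ℤ) f s w := by
      have hidx : (0 : ℤ) + k + 1 = ((k + 1 : ℕ) : ℤ) := by push_cast; ring
      rw [hidx, H_coeff_congr (f := c2 0 (k : ℤ) (fun _ => (1:ℝ)) g) (g := f)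
        (fun x => by simp [c2, hgd]) s w]
    rw [e1, e2, zero_add]
  
lemma lieGen_range_sum (K : ℕ) (h : ℕ → ℝ → ℝ) (hsm : ∀ k, ContDiff ℝ (⊤ : ℕ∞) (h k)) :
    LieGen (fun s w => ∑ k ∈ Finset.range (K+1), H (k : ℤ) (h k) s w) := by
  induction K with
  | zero =>
    refine LieGen.congr (lieGen_H 0 (h 0) (hsm 0)) ?_
    intro s w _
    simp
  | succ K ih =>
    refine LieGen.congr (LieGen.add ih (lieGen_H (K+1) (h (K+1)) (hsm (K+1)))) ?_
    intro s w _
    show (fun s w => ∑ k ∈ Finset.range (K+1), H (k : ℤ) (h k) s w) s w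
        + H ((K+1 : ℕ) : ℤ) (h (K+1)) s w = _
    rw [Finset.sum_range_succ]

lemma H_eq_sqrt (k : ℕ) (f : ℝ → ℝ) (s w : ℝ) (hw : w ^ 2 < 1) :
    H (k : ℤ) f s w = Real.sqrt (1 - w ^ 2) * (f s * (w / Real.sqrt (1 - w ^ 2)) ^ k) := by
  have hu : 0 < 1 - w ^ 2 := by nlinarith
  have hz : (0:ℝ) < (1 - w ^ 2) ^ ((1:ℝ)/2) := Real.rpow_pos_of_pos hu _
  rw [H_natCast, Real.sqrt_eq_rpow, rpow_half_split _ hu 1 k, div_pow]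
  rw [show (1:ℝ)/2 = ((1:ℝ))/2 from rfl]
  simp only [inv_pow]; field_simp

lemma sum_eq_sqrt_sum (K : ℕ) (h : ℕ → ℝ → ℝ) (s w : ℝ) (hw : w ^ 2 < 1) :
    ∑ k ∈ Finset.range (K+1), H (k : ℤ) (h k) s w
      = Real.sqrt (1 - w ^ 2) *
        ∑ k ∈ Finset.range (K+1), h k s * (w / Real.sqrt (1 - w ^ 2)) ^ k := by
  rw [Finset.mul_sum]
  exact Finset.sum_congr rfl fun k _ => H_eq_sqrt k (h k) s w hw

/-- the Lie algebra generated by `Λ₀` consists exactly of the finite sums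
`∑_{k=0}^{K} H_{k,h_k}` with smooth coefficients `h_k`; equivalently, of the functions
`(s,w) ↦ √(1−w²)·P(s, w/√(1−w²))` with `P` a polynomial in the second variable with
coefficients smooth functions of the first. -/
theorem lieGen_eq_sums (F : ℝ → ℝ → ℝ) :
    (LieGen F ↔
      ∃ (K : ℕ) (h : ℕ → ℝ → ℝ), (∀ k, ContDiff ℝ (⊤ : ℕ∞) (h k)) ∧
        ∀ s : ℝ, ∀ w ∈ Set.Ioo (-1 : ℝ) 1,
          F s w = ∑ k ∈ Finset.range (K + 1), H (k : ℤ) (h k) s w) ∧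
    (LieGen F ↔
      ∃ (K : ℕ) (c : ℕ → ℝ → ℝ), (∀ k, ContDiff ℝ (⊤ : ℕ∞) (c k)) ∧
        ∀ s : ℝ, ∀ w ∈ Set.Ioo (-1 : ℝ) 1,
          F s w = Real.sqrt (1 - w ^ 2) *
            ∑ k ∈ Finset.range (K + 1), c k s * (w / Real.sqrt (1 - w ^ 2)) ^ k) := by
  have hiff1 : LieGen F ↔
      ∃ (K : ℕ) (h : ℕ → ℝ → ℝ), (∀ k, ContDiff ℝ (⊤ : ℕ∞) (h k)) ∧
        ∀ s : ℝ, ∀ w ∈ Set.Ioo (-1 : ℝ) 1,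
          F s w = ∑ k ∈ Finset.range (K + 1), H (k : ℤ) (h k) s w := by
    constructor
    · intro hF
      obtain ⟨l, hs, hn, he⟩ := lieGen_rep hF
      refine ⟨Kof l, fun k x => (l.map (fun p => if p.1 = (k : ℤ) then p.2 x else 0)).sum,
        ?_, ?_⟩
      · intro k
        apply contDiff_list_sum
        intro p hp
        by_cases hc : p.1 = (k : ℤ)
        · simp only [if_pos hc]
          exact hs p hp
        · simp only [if_neg hc]
          exact contDiff_const
      · intro s w hw
        rw [he s w hw, ← sum_range_of_list l (Kof l) (le_Kof l) hn s w]
    · rintro ⟨K, h, hsm, he⟩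
      exact LieGen.congr (lieGen_range_sum K h hsm) (fun s w hw => (he s w hw).symm)
  refine ⟨hiff1, hiff1.trans ?_⟩
  constructor
  · rintro ⟨K, h, hsm, he⟩
    refine ⟨K, h, hsm, fun s w hw => ?_⟩
    have hw2 : w ^ 2 < 1 := by
      obtain ⟨h1', h2'⟩ := hw; nlinarith
    rw [he s w hw, sum_eq_sqrt_sum K h s w hw2]
  · rintro ⟨K, c, hsm, he⟩
    refine ⟨K, c, hsm, fun s w hw => ?_⟩
    have hw2 : w ^ 2 < 1 := by
      obtain ⟨h1', h2'⟩ := hw; nlinarith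
    rw [he s w hw, sum_eq_sqrt_sum K c s w hw2]
end

section
/- For all integers d, k ≥ 0 and all smooth 2π-periodic functions f, g : ℝ → ℝ, setting h₁ := (d+k)·f·g′ − k·(f·g)′ and h₂ := (d+k−2)·f·g′ − (k−1)·(f·g)′, one has {H_{d,f}, H_{k,g}} = H_{d+k−1, h₁} + H_{d+k+1, h₂} on ℝ × (−1,1), and (d+k−2)·∫₀^{2π} h₁(s) ds = (d+k)·∫₀^{2π} h₂(s) ds. -/
open Real

private lemma Hw (n : ℕ) (f : ℝ → ℝ) (s w : ℝ) (hu : (0:ℝ) < 1 - w^2) :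
    HasDerivAt (fun w' => H (n:ℤ) f s w')
      (f s * ((n:ℝ) * w ^ (n-1) * (1 - w^2) ^ ((1-(n:ℝ))/2)
        + w ^ n * ((1-(n:ℝ))/2 * (1 - w^2) ^ ((1-(n:ℝ))/2 - 1) * (-(2*w))))) w := by
  have h1 : HasDerivAt (fun x : ℝ => 1 - x^2) (-(2*w)) w := by
    simpa using ((hasDerivAt_pow 2 w).const_sub 1)
  have h2 := h1.rpow_const (p := (1-(n:ℝ))/2) (Or.inl hu.ne')
  have h3 := ((hasDerivAt_pow n w).mul h2).const_mul (f s)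
  have he : (fun w' => H (n:ℤ) f s w')
      = fun w' => f s * (w' ^ n * (1 - w'^2) ^ ((1-(n:ℝ))/2)) := by
    funext w'; simp [H, mul_assoc]
  rw [he]; exact h3.congr_deriv (by ring)

private lemma Hs (n : ℕ) (f : ℝ → ℝ) (hf : ContDiff ℝ (⊤ : ℕ∞) f) (s w : ℝ) :
    deriv (fun s' => H (n:ℤ) f s' w) s
      = deriv f s * (w ^ n * (1 - w^2) ^ ((1-(n:ℝ))/2)) := by
  have he : (fun s' => H (n:ℤ) f s' w)
      = fun s' => f s' * (w ^ n * (1 - w^2) ^ ((1-(n:ℝ))/2)) := by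
    funext s'; simp [H, mul_assoc]
  rw [he]
  exact ((hf.differentiable (by simp)).differentiableAt.hasDerivAt.mul_const _).deriv

/-- with `h₁ = (d+k)·f·g′ − k·(f·g)′` and `h₂ = (d+k−2)·f·g′ − (k−1)·(f·g)′`,
one has `{H_{d,f}, H_{k,g}} = H_{d+k−1,h₁} + H_{d+k+1,h₂}` on `ℝ × (−1,1)`, and
`(d+k−2)·∫₀^{2π} h₁ = (d+k)·∫₀^{2π} h₂`. -/
theorem poisson_bracket_periodic (d k : ℕ) (f g : ℝ → ℝ)
    (hf : ContDiff ℝ (⊤ : ℕ∞) f) (hg : ContDiff ℝ (⊤ : ℕ∞) g)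
    (hfper : ∀ s, f (s + 2 * π) = f s) (hgper : ∀ s, g (s + 2 * π) = g s) :
    (∀ s : ℝ, ∀ w ∈ Set.Ioo (-1 : ℝ) 1,
      pb (H d f) (H k g) s w
        = H ((d : ℤ) + (k : ℤ) - 1)
            (fun s => ((d : ℝ) + (k : ℝ)) * f s * deriv g s
              - (k : ℝ) * deriv (fun t => f t * g t) s) s w
          + H ((d : ℤ) + (k : ℤ) + 1)
            (fun s => ((d : ℝ) + (k : ℝ) - 2) * f s * deriv g s
              - ((k : ℝ) - 1) * deriv (fun t => f t * g t) s) s w) ∧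
    ((d : ℝ) + (k : ℝ) - 2) *
        (∫ s in (0:ℝ)..(2 * π),
          (((d : ℝ) + (k : ℝ)) * f s * deriv g s - (k : ℝ) * deriv (fun t => f t * g t) s))
      = ((d : ℝ) + (k : ℝ)) *
        (∫ s in (0:ℝ)..(2 * π),
          (((d : ℝ) + (k : ℝ) - 2) * f s * deriv g s
            - ((k : ℝ) - 1) * deriv (fun t => f t * g t) s)) := by
  constructor
  · intro s w hw
    have hu : (0:ℝ) < 1 - w^2 := by nlinarith [hw.1, hw.2]
    have hune : (1 - w^2) ≠ 0 := hu.ne'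
    have hfd : DifferentiableAt ℝ f s := (hf.differentiable (by simp)).differentiableAt
    have hgd : DifferentiableAt ℝ g s := (hg.differentiable (by simp)).differentiableAt
    have hD : deriv (fun t => f t * g t) s = deriv f s * g s + f s * deriv g s :=
      deriv_fun_mul hfd hgd
    rw [pb, Hs d f hf, Hs k g hg, (Hw d f s w hu).deriv, (Hw k g s w hu).deriv]
    set a := f s; set b := g s; set a' := deriv f s; set b' := deriv g s
    set u := 1 - w^2 with hudef
    -- express rpow differences
    have hed : u ^ ((1-(d:ℝ))/2 - 1) = u ^ ((1-(d:ℝ))/2) / u := by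
      rw [rpow_sub hu, rpow_one]
    have hek : u ^ ((1-(k:ℝ))/2 - 1) = u ^ ((1-(k:ℝ))/2) / u := by
      rw [rpow_sub hu, rpow_one]
    rcases Nat.eq_zero_or_pos (d + k) with h0 | hpos
    · obtain ⟨hd0, hk0⟩ := Nat.add_eq_zero.mp h0
      subst hd0 hk0
      have h1 : u ^ ((1-((0:ℕ):ℝ))/2) * u ^ ((1-((0:ℕ):ℝ))/2) = u := by
        rw [← rpow_add hu]; norm_num
      have hXY : u ^ ((-1:ℝ)/2) * u ^ ((1:ℝ)/2) = 1 := by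
        rw [← rpow_add hu]; norm_num
      have hXY2 : u ^ (-((1:ℝ)/2)) * u ^ ((1:ℝ)/2) = 1 := by
        rw [← rpow_add hu]; norm_num
      simp only [H]
      norm_num [hD]
      linear_combination (w*(deriv f s * g s - f s * deriv g s)) * hXY2

    · obtain ⟨m, hm⟩ : ∃ m, d + k = m + 1 := ⟨d + k - 1, (Nat.succ_pred_eq_of_pos hpos).symm⟩
      have hZ1 : (d : ℤ) + (k : ℤ) - 1 = (m : ℤ) := by omega
      have hZ2 : (d : ℤ) + (k : ℤ) + 1 = ((m+2 : ℕ) : ℤ) := by omega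
      rw [hZ1, hZ2]
      have hRcast : ((m:ℤ):ℝ) = (m:ℝ) := by norm_cast
      simp only [H, if_neg ((Int.natCast_nonneg m).not_gt),
        if_neg ((Int.natCast_nonneg (m+2)).not_gt), Int.toNat_natCast, Int.cast_natCast, hD]
      have hdk : (d:ℝ) + (k:ℝ) = (m:ℝ) + 1 := by exact_mod_cast hm
      have hPQ : u ^ ((1-(d:ℝ))/2) * u ^ ((1-(k:ℝ))/2) = u ^ ((1-(m:ℝ))/2) := by
        rw [← rpow_add hu]; congr 1; linarith
      rw [hed, hek, show ((m+2:ℕ):ℝ) = (m:ℝ)+2 by push_cast; ring,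
          show (1 - ((m:ℝ)+2))/2 = (1-(m:ℝ))/2 - 1 by ring, rpow_sub hu, rpow_one,
          ← hPQ]
      rcases Nat.eq_zero_or_pos d with hd | hd
      · obtain rfl : d = 0 := hd
        obtain rfl : k = m + 1 := by omega
        simp only [Nat.zero_sub, Nat.add_sub_cancel, pow_zero]
        push_cast
        field_simp
        ring
      · rcases Nat.eq_zero_or_pos k with hk | hk
        · obtain rfl : k = 0 := hk
          obtain rfl : d = m + 1 := by omega
          simp only [Nat.zero_sub, Nat.add_sub_cancel, pow_zero]
          push_cast; field_simp; ring
        · obtain ⟨d', rfl⟩ : ∃ d', d = d' + 1 := ⟨d - 1, by omega⟩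
          obtain ⟨k', rfl⟩ : ∃ k', k = k' + 1 := ⟨k - 1, by omega⟩
          obtain rfl : m = d' + k' + 1 := by omega
          simp only [Nat.add_sub_cancel]
          push_cast; field_simp; ring
  · have hfg : ContDiff ℝ (⊤ : ℕ∞) (fun t => f t * g t) := hf.mul hg
    have hI0 : ∫ s in (0:ℝ)..(2*π), deriv (fun t => f t * g t) s = 0 := by
      rw [intervalIntegral.integral_deriv_eq_sub
        (fun x _ => (hfg.differentiable (by simp)).differentiableAt)
        ((hfg.continuous_deriv (by simp)).intervalIntegrable _ _)]
      have h1 := hfper 0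
      have h2 := hgper 0
      simp only [zero_add] at h1 h2
      rw [h1, h2]; ring
    have hint1 : IntervalIntegrable (fun s => f s * deriv g s) MeasureTheory.volume 0 (2*π) :=
      ((hf.continuous).mul (hg.continuous_deriv (by simp))).intervalIntegrable _ _
    have hint2 : IntervalIntegrable (deriv fun t => f t * g t) MeasureTheory.volume 0 (2*π) :=
      (hfg.continuous_deriv (by simp)).intervalIntegrable _ _
    have key : ∀ c1 c2 : ℝ,
        ∫ s in (0:ℝ)..(2*π), (c1 * (f s * deriv g s) - c2 * deriv (fun t => f t * g t) s)
          = c1 * ∫ s in (0:ℝ)..(2*π), f s * deriv g s := by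
      intro c1 c2
      rw [intervalIntegral.integral_sub (hint1.const_mul c1) (hint2.const_mul c2),
          intervalIntegral.integral_const_mul, intervalIntegral.integral_const_mul, hI0]
      ring
    simp only [mul_assoc]
    rw [key, key]
    ring
end

section
/- Every smooth 2π-periodic function f : ℝ → ℝ with ∫₀^{2π} f(s) ds = 0 can be written as a sum f = ∑_{j=1}^{4} f_j·g_j, where all f_j, g_j : ℝ → ℝ are smooth 2π-periodic functions with ∫₀^{2π} f_j(s) ds = ∫₀^{2π} g_j(s) ds = 0. -/
open Real

/-- every smooth 2π-periodic function with zero average over a period is a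
sum of four products of smooth 2π-periodic functions with zero average over a period. -/
theorem zero_average_sum_of_four_products (f : ℝ → ℝ)
    (hf : ContDiff ℝ (⊤ : ℕ∞) f) (hper : ∀ s, f (s + 2 * π) = f s)
    (hzero : ∫ s in (0:ℝ)..(2 * π), f s = 0) :
    ∃ F G : Fin 4 → ℝ → ℝ,
      (∀ j, ContDiff ℝ (⊤ : ℕ∞) (F j)) ∧ (∀ j, ContDiff ℝ (⊤ : ℕ∞) (G j)) ∧
      (∀ j s, F j (s + 2 * π) = F j s) ∧ (∀ j s, G j (s + 2 * π) = G j s) ∧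
      (∀ j, ∫ s in (0:ℝ)..(2 * π), F j s = 0) ∧
      (∀ j, ∫ s in (0:ℝ)..(2 * π), G j s = 0) ∧
      (∀ s, f s = ∑ j, F j s * G j s) := by
  set c : ℝ := (∫ s in (0:ℝ)..(2*π), f s * Real.sin s) / (2*π) with hc
  set d : ℝ := (∫ s in (0:ℝ)..(2*π), f s * Real.cos s) / (2*π) with hd
  have hπ : (2:ℝ)*π ≠ 0 := by positivity
  have hsin2per : ∀ s : ℝ, Real.sin (2*(s + 2*π)) = Real.sin (2*s) := by
    intro s
    rw [show (2:ℝ)*(s + 2*π) = 2*s + 2*π + 2*π by ring, Real.sin_add_two_pi,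
      Real.sin_add_two_pi]
  have hcos2per : ∀ s : ℝ, Real.cos (2*(s + 2*π)) = Real.cos (2*s) := by
    intro s
    rw [show (2:ℝ)*(s + 2*π) = 2*s + 2*π + 2*π by ring, Real.cos_add_two_pi,
      Real.cos_add_two_pi]
  have hIsin : ∫ s in (0:ℝ)..(2*π), Real.sin s = 0 := by
    simp [integral_sin]
  have hIcos : ∫ s in (0:ℝ)..(2*π), Real.cos s = 0 := by
    simp [integral_cos]
  have hIsin2 : ∫ s in (0:ℝ)..(2*π), Real.sin (2*s) = 0 := by
    rw [intervalIntegral.integral_comp_mul_left Real.sin (by norm_num : (2:ℝ) ≠ 0)]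
    rw [integral_sin]
    rw [show (2:ℝ)*(2*π) = 2*π + 2*π by ring, Real.cos_add_two_pi]
    simp
  have hIcos2 : ∫ s in (0:ℝ)..(2*π), Real.cos (2*s) = 0 := by
    rw [intervalIntegral.integral_comp_mul_left Real.cos (by norm_num : (2:ℝ) ≠ 0)]
    rw [integral_cos]
    rw [show (2:ℝ)*(2*π) = 2*π + 2*π by ring, Real.sin_add_two_pi]
    simp
  have hfc : Continuous f := hf.continuous
  have hint1 : IntervalIntegrable (fun s => f s * Real.sin s) MeasureTheory.volume 0 (2*π) :=
    (hfc.mul Real.continuous_sin).intervalIntegrable _ _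
  have hint2 : IntervalIntegrable (fun s => f s * Real.cos s) MeasureTheory.volume 0 (2*π) :=
    (hfc.mul Real.continuous_cos).intervalIntegrable _ _
  refine ⟨![fun s => f s * Real.sin s - c, fun s => f s * Real.cos s - d,
      fun s => c * Real.sin (2*s) + d * Real.cos (2*s),
      fun s => d * Real.sin (2*s) - c * Real.cos (2*s)],
    ![Real.sin, Real.cos, Real.cos, Real.sin], ?_, ?_, ?_, ?_, ?_, ?_, ?_⟩
  · intro j
    have hs2 : ContDiff ℝ (⊤ : ℕ∞) (fun s : ℝ => Real.sin (2*s)) :=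
      Real.contDiff_sin.comp (contDiff_const.mul contDiff_id)
    have hc2 : ContDiff ℝ (⊤ : ℕ∞) (fun s : ℝ => Real.cos (2*s)) :=
      Real.contDiff_cos.comp (contDiff_const.mul contDiff_id)
    fin_cases j
    · exact (hf.mul Real.contDiff_sin).sub contDiff_const
    · exact (hf.mul Real.contDiff_cos).sub contDiff_const
    · exact (contDiff_const.mul hs2).add (contDiff_const.mul hc2)
    · exact (contDiff_const.mul hs2).sub (contDiff_const.mul hc2)
  · intro j
    fin_cases j
    · exact Real.contDiff_sin
    · exact Real.contDiff_cos
    · exact Real.contDiff_cos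
    · exact Real.contDiff_sin
  · intro j s
    fin_cases j <;>
      simp [hper, Real.sin_add_two_pi, Real.cos_add_two_pi, hsin2per, hcos2per]
  · intro j s
    fin_cases j <;>
      simp [Real.sin_add_two_pi, Real.cos_add_two_pi]
  · intro j
    fin_cases j
    · show (∫ s in (0:ℝ)..(2*π), (f s * Real.sin s - c)) = 0
      rw [intervalIntegral.integral_sub hint1 (intervalIntegrable_const)]
      rw [intervalIntegral.integral_const]
      rw [hc]
      rw [smul_eq_mul, sub_zero]
      field_simp
      ring
    · show (∫ s in (0:ℝ)..(2*π), (f s * Real.cos s - d)) = 0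
      rw [intervalIntegral.integral_sub hint2 (intervalIntegrable_const)]
      rw [intervalIntegral.integral_const]
      rw [hd]
      rw [smul_eq_mul, sub_zero]
      field_simp
      ring
    · show (∫ s in (0:ℝ)..(2*π), (c * Real.sin (2*s) + d * Real.cos (2*s))) = 0
      rw [intervalIntegral.integral_add
          ((by fun_prop : Continuous fun s:ℝ => c * Real.sin (2*s)).intervalIntegrable _ _)
          ((by fun_prop : Continuous fun s:ℝ => d * Real.cos (2*s)).intervalIntegrable _ _)]
      rw [intervalIntegral.integral_const_mul, intervalIntegral.integral_const_mul]
      rw [hIsin2, hIcos2]; ring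
    · show (∫ s in (0:ℝ)..(2*π), (d * Real.sin (2*s) - c * Real.cos (2*s))) = 0
      rw [intervalIntegral.integral_sub
          ((by fun_prop : Continuous fun s:ℝ => d * Real.sin (2*s)).intervalIntegrable _ _)
          ((by fun_prop : Continuous fun s:ℝ => c * Real.cos (2*s)).intervalIntegrable _ _)]
      rw [intervalIntegral.integral_const_mul, intervalIntegral.integral_const_mul]
      rw [hIsin2, hIcos2]; ring
  · intro j
    fin_cases j
    · exact hIsin
    · exact hIcos
    · exact hIcos
    · exact hIsin
  · intro s
    rw [Fin.sum_univ_four]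
    simp only [Matrix.cons_val_zero, Matrix.cons_val_one, Matrix.head_cons,
      Matrix.cons_val_two, Matrix.tail_cons, Matrix.cons_val_three]
    rw [Real.sin_two_mul, Real.cos_two_mul]
    have h1 := Real.sin_sq_add_cos_sq s
    linear_combination (-(f s + 2*d*Real.cos s)) * h1
end

section
/- For all integers d, k ≥ 0 with d + k ≠ 2, every smooth 2π-periodic function h : ℝ → ℝ can be written as a finite sum h = ∑_{l=1}^{N} ((d−1)·f_l·g_l′ − (k−1)·f_l′·g_l) with N ≤ 4, where all f_l, g_l : ℝ → ℝ are smooth 2π-periodic functions with ∫₀^{2π} f_l(s) ds = ∫₀^{2π} g_l(s) ds = 0. -/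
open Real intervalIntegral

lemma int_cos_sq : ∫ t in (0:ℝ)..(2*π), Real.cos t ^ 2 = π := by
  have H : ∀ t ∈ Set.uIcc (0:ℝ) (2*π), HasDerivAt (fun x => x/2 + Real.sin x * Real.cos x / 2) (Real.cos t ^ 2) t := by
    intro t _
    have h1 := ((Real.hasDerivAt_sin t).mul (Real.hasDerivAt_cos t)).div_const 2
    have h2 := ((hasDerivAt_id t).div_const 2).add h1
    refine h2.congr_deriv ?_
    nlinarith [Real.sin_sq_add_cos_sq t]
  rw [intervalIntegral.integral_eq_sub_of_hasDerivAt H (by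
    apply Continuous.intervalIntegrable; continuity)]
  simp [Real.sin_two_pi, Real.cos_two_pi]

lemma int_sin_sq : ∫ t in (0:ℝ)..(2*π), Real.sin t ^ 2 = π := by
  have H : ∀ t ∈ Set.uIcc (0:ℝ) (2*π), HasDerivAt (fun x => x/2 - Real.sin x * Real.cos x / 2) (Real.sin t ^ 2) t := by
    intro t _
    have h1 := ((Real.hasDerivAt_sin t).mul (Real.hasDerivAt_cos t)).div_const 2
    have h2 := ((hasDerivAt_id t).div_const 2).sub h1
    refine h2.congr_deriv ?_
    nlinarith [Real.sin_sq_add_cos_sq t]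
  rw [intervalIntegral.integral_eq_sub_of_hasDerivAt H (by
    apply Continuous.intervalIntegrable; continuity)]
  simp [Real.sin_two_pi, Real.cos_two_pi]

lemma int_sin_cos : ∫ t in (0:ℝ)..(2*π), Real.sin t * Real.cos t = 0 := by
  have H : ∀ t ∈ Set.uIcc (0:ℝ) (2*π), HasDerivAt (fun x => Real.sin x ^ 2 / 2) (Real.sin t * Real.cos t) t := by
    intro t _
    have h1 := ((Real.hasDerivAt_sin t).pow 2).div_const 2
    refine h1.congr_deriv ?_
    ring
  rw [intervalIntegral.integral_eq_sub_of_hasDerivAt H (by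
    apply Continuous.intervalIntegrable; continuity)]
  simp [Real.sin_two_pi]

lemma aux_two_terms (a b : ℝ) (hab : a + b ≠ 0) (hab2 : a + 2*b ≠ 0) (h : ℝ → ℝ)
    (hh : ContDiff ℝ (⊤ : ℕ∞) h) (hper : ∀ s, h (s + 2*π) = h s) :
    ∃ f₁ f₂ g₁ g₂ : ℝ → ℝ,
      ContDiff ℝ (⊤ : ℕ∞) f₁ ∧ ContDiff ℝ (⊤ : ℕ∞) f₂ ∧ ContDiff ℝ (⊤ : ℕ∞) g₁ ∧ ContDiff ℝ (⊤ : ℕ∞) g₂ ∧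
      (∀ s, f₁ (s + 2*π) = f₁ s) ∧ (∀ s, f₂ (s + 2*π) = f₂ s) ∧
      (∀ s, g₁ (s + 2*π) = g₁ s) ∧ (∀ s, g₂ (s + 2*π) = g₂ s) ∧
      (∫ s in (0:ℝ)..(2*π), f₁ s) = 0 ∧ (∫ s in (0:ℝ)..(2*π), f₂ s) = 0 ∧
      (∫ s in (0:ℝ)..(2*π), g₁ s) = 0 ∧ (∫ s in (0:ℝ)..(2*π), g₂ s) = 0 ∧
      (∀ s, h s = (a * f₁ s * deriv g₁ s - b * deriv f₁ s * g₁ s)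
               + (a * f₂ s * deriv g₂ s - b * deriv f₂ s * g₂ s)) := by
  set C : ℝ := ∫ t in (0:ℝ)..(2*π), h t * Real.cos t with hC
  set S : ℝ := ∫ t in (0:ℝ)..(2*π), h t * Real.sin t with hS
  set α : ℝ := -C / ((a + 2*b) * π) with hα
  set β : ℝ := S / ((a + 2*b) * π) with hβ
  set v : ℝ → ℝ := fun s => α * Real.sin s + β * Real.cos s with hv
  set vd : ℝ → ℝ := fun s => α * Real.cos s - β * Real.sin s with hvd
  set u : ℝ → ℝ := fun s => (h s + b * vd s) / (a + b) with hu
  refine ⟨fun s => u s * Real.cos s + v s * Real.sin s,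
          fun s => -(u s * Real.sin s) + v s * Real.cos s,
          Real.sin, Real.cos, ?_, ?_, Real.contDiff_sin, Real.contDiff_cos,
          ?_, ?_, ?_, ?_, ?_, ?_, ?_, ?_, ?_⟩
  -- smoothness of u, v parts
  · have hu' : ContDiff ℝ (⊤ : ℕ∞) u := ((hh.add (ContDiff.mul contDiff_const
      ((contDiff_const.mul Real.contDiff_cos).sub (contDiff_const.mul Real.contDiff_sin)))).div_const _)
    exact (hu'.mul Real.contDiff_cos).add
      (((contDiff_const.mul Real.contDiff_sin).add (contDiff_const.mul Real.contDiff_cos)).mul Real.contDiff_sin)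
  · have hu' : ContDiff ℝ (⊤ : ℕ∞) u := ((hh.add (ContDiff.mul contDiff_const
      ((contDiff_const.mul Real.contDiff_cos).sub (contDiff_const.mul Real.contDiff_sin)))).div_const _)
    exact ((hu'.mul Real.contDiff_sin).neg).add
      (((contDiff_const.mul Real.contDiff_sin).add (contDiff_const.mul Real.contDiff_cos)).mul Real.contDiff_cos)
  -- periodicity
  · intro s; simp [hu, hv, hvd, hper s, Real.sin_add_two_pi, Real.cos_add_two_pi]
  · intro s; simp [hu, hv, hvd, hper s, Real.sin_add_two_pi, Real.cos_add_two_pi]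
  · intro s; exact Real.sin_add_two_pi s
  · intro s; exact Real.cos_add_two_pi s
  -- zero means
  · have cth : Continuous h := hh.continuous
    have I1 : IntervalIntegrable (fun t => 1/(a+b) * (h t * Real.cos t)) MeasureTheory.volume 0 (2*π) :=
      (continuous_const.mul (cth.mul Real.continuous_cos)).intervalIntegrable _ _
    have I2 : IntervalIntegrable (fun t => b*α/(a+b) * Real.cos t^2) MeasureTheory.volume 0 (2*π) :=
      (continuous_const.mul (Real.continuous_cos.pow 2)).intervalIntegrable _ _
    have I3 : IntervalIntegrable (fun t => (β - b*β/(a+b)) * (Real.sin t * Real.cos t)) MeasureTheory.volume 0 (2*π) :=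
      (continuous_const.mul (Real.continuous_sin.mul Real.continuous_cos)).intervalIntegrable _ _
    have I4 : IntervalIntegrable (fun t => α * Real.sin t^2) MeasureTheory.volume 0 (2*π) :=
      (continuous_const.mul (Real.continuous_sin.pow 2)).intervalIntegrable _ _
    have e : ∀ t ∈ Set.uIcc (0:ℝ) (2*π), u t * Real.cos t + v t * Real.sin t
        = 1/(a+b) * (h t * Real.cos t) + (b*α/(a+b) * Real.cos t^2
          + ((β - b*β/(a+b)) * (Real.sin t * Real.cos t) + α * Real.sin t^2)) := by
      intro t _
      simp only [hu, hv, hvd]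
      field_simp
      ring
    rw [intervalIntegral.integral_congr e,
      intervalIntegral.integral_add I1 (I2.add (I3.add I4)),
      intervalIntegral.integral_add I2 (I3.add I4),
      intervalIntegral.integral_add I3 I4,
      intervalIntegral.integral_const_mul, intervalIntegral.integral_const_mul,
      intervalIntegral.integral_const_mul, intervalIntegral.integral_const_mul,
      int_cos_sq, int_sin_cos, int_sin_sq, ← hC]
    rw [hα]
    field_simp
    have hab2' : b * 2 + a ≠ 0 := by rw [add_comm, mul_comm]; exact hab2
    ring_nf
    field_simp
    ring
  · have cth : Continuous h := hh.continuous
    have I1 : IntervalIntegrable (fun t => -(1/(a+b)) * (h t * Real.sin t)) MeasureTheory.volume 0 (2*π) :=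
      (continuous_const.mul (cth.mul Real.continuous_sin)).intervalIntegrable _ _
    have I2 : IntervalIntegrable (fun t => b*β/(a+b) * Real.sin t^2) MeasureTheory.volume 0 (2*π) :=
      (continuous_const.mul (Real.continuous_sin.pow 2)).intervalIntegrable _ _
    have I3 : IntervalIntegrable (fun t => (α - b*α/(a+b)) * (Real.sin t * Real.cos t)) MeasureTheory.volume 0 (2*π) :=
      (continuous_const.mul (Real.continuous_sin.mul Real.continuous_cos)).intervalIntegrable _ _
    have I4 : IntervalIntegrable (fun t => β * Real.cos t^2) MeasureTheory.volume 0 (2*π) :=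
      (continuous_const.mul (Real.continuous_cos.pow 2)).intervalIntegrable _ _
    have e : ∀ t ∈ Set.uIcc (0:ℝ) (2*π), -(u t * Real.sin t) + v t * Real.cos t
        = -(1/(a+b)) * (h t * Real.sin t) + (b*β/(a+b) * Real.sin t^2
          + ((α - b*α/(a+b)) * (Real.sin t * Real.cos t) + β * Real.cos t^2)) := by
      intro t _
      simp only [hu, hv, hvd]
      field_simp
      ring
    rw [intervalIntegral.integral_congr e,
      intervalIntegral.integral_add I1 (I2.add (I3.add I4)),
      intervalIntegral.integral_add I2 (I3.add I4),
      intervalIntegral.integral_add I3 I4,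
      intervalIntegral.integral_const_mul, intervalIntegral.integral_const_mul,
      intervalIntegral.integral_const_mul, intervalIntegral.integral_const_mul,
      int_sin_sq, int_sin_cos, int_cos_sq, ← hS]
    rw [hβ]
    field_simp
    have hab2' : b * 2 + a ≠ 0 := by rw [add_comm, mul_comm]; exact hab2
    ring_nf
    field_simp
    ring
  · simp [integral_sin]
  · simp [integral_cos]
  -- the identity
  · intro s
    have hds : HasDerivAt Real.sin (Real.cos s) s := Real.hasDerivAt_sin s
    have hdc : HasDerivAt Real.cos (-Real.sin s) s := Real.hasDerivAt_cos s
    have hdv : HasDerivAt v (α * Real.cos s - β * Real.sin s) s :=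
      (hds.const_mul α).add (hdc.const_mul β) |>.congr_deriv (by ring)
    have hdvd : HasDerivAt vd (α * (-Real.sin s) - β * Real.cos s) s :=
      ((hdc.const_mul α).sub (hds.const_mul β)).congr_deriv (by ring)
    have hdh : HasDerivAt h (deriv h s) s := ((hh.differentiable (by simp)) s).hasDerivAt
    have hdu : HasDerivAt u ((deriv h s + b * (α * (-Real.sin s) - β * Real.cos s)) / (a + b)) s :=
      (hdh.add (hdvd.const_mul b)).div_const _
    have hdf₁ : HasDerivAt (fun s => u s * Real.cos s + v s * Real.sin s)
        (((deriv h s + b * (α * (-Real.sin s) - β * Real.cos s)) / (a + b)) * Real.cos s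
          + u s * (-Real.sin s)
          + ((α * Real.cos s - β * Real.sin s) * Real.sin s + v s * Real.cos s)) s :=
      ((hdu.mul hdc).add (hdv.mul hds)).congr_deriv (by ring)
    have hdf₂ : HasDerivAt (fun s => -(u s * Real.sin s) + v s * Real.cos s)
        (-(((deriv h s + b * (α * (-Real.sin s) - β * Real.cos s)) / (a + b)) * Real.sin s
            + u s * Real.cos s)
          + ((α * Real.cos s - β * Real.sin s) * Real.cos s + v s * (-Real.sin s))) s :=
      (((hdu.mul hds).neg).add (hdv.mul hdc)).congr_deriv (by ring)
    rw [hdf₁.deriv, hdf₂.deriv, Real.deriv_sin, Real.deriv_cos]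
    simp only [hu, hv, hvd]
    field_simp
    linear_combination (-(h s * (a+b))) * Real.sin_sq_add_cos_sq s

/-- for `d, k ≥ 0` with `d + k ≠ 2`, every smooth 2π-periodic function `h` is
a sum of at most 4 terms `(d−1)·f_l·g_l′ − (k−1)·f_l′·g_l`, with all `f_l, g_l` smooth
2π-periodic with zero average over a period. -/
theorem representation_by_brackets (d k : ℕ) (hdk : d + k ≠ 2) (h : ℝ → ℝ)
    (hh : ContDiff ℝ (⊤ : ℕ∞) h) (hper : ∀ s, h (s + 2 * π) = h s) :
    ∃ (N : ℕ), N ≤ 4 ∧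
      ∃ f g : Fin N → ℝ → ℝ,
        (∀ l, ContDiff ℝ (⊤ : ℕ∞) (f l)) ∧ (∀ l, ContDiff ℝ (⊤ : ℕ∞) (g l)) ∧
        (∀ l s, f l (s + 2 * π) = f l s) ∧ (∀ l s, g l (s + 2 * π) = g l s) ∧
        (∀ l, ∫ s in (0:ℝ)..(2 * π), f l s = 0) ∧
        (∀ l, ∫ s in (0:ℝ)..(2 * π), g l s = 0) ∧
        (∀ s, h s = ∑ l, (((d : ℝ) - 1) * f l s * deriv (g l) s
          - ((k : ℝ) - 1) * deriv (f l) s * g l s)) := by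
  set a : ℝ := (d : ℝ) - 1 with ha
  set b : ℝ := (k : ℝ) - 1 with hb
  have hab : a + b ≠ 0 := by
    rw [ha, hb]
    intro hc
    apply hdk
    have : ((d : ℝ) + (k : ℝ)) = 2 := by linarith
    exact_mod_cast this
  by_cases ha2 : a + 2*b ≠ 0
  · obtain ⟨f₁, f₂, g₁, g₂, cf₁, cf₂, cg₁, cg₂, pf₁, pf₂, pg₁, pg₂, if₁, if₂, ig₁, ig₂, hid⟩ :=
      aux_two_terms a b hab ha2 h hh hper
    refine ⟨2, by norm_num, ![f₁, f₂], ![g₁, g₂], ?_, ?_, ?_, ?_, ?_, ?_, ?_⟩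
    · intro l; fin_cases l <;> simpa
    · intro l; fin_cases l <;> simpa
    · intro l; fin_cases l <;> simpa
    · intro l; fin_cases l <;> simpa
    · intro l; fin_cases l <;> simpa
    · intro l; fin_cases l <;> simpa
    · intro s
      rw [Fin.sum_univ_two]
      simp only [Matrix.cons_val_zero, Matrix.cons_val_one, Matrix.head_cons]
      exact hid s
  · push_neg at ha2
    have hab2' : -b + 2*(-a) ≠ 0 := by
      intro hc
      apply hab
      linarith
    have hab' : -b + -a ≠ 0 := by intro hc; exact hab (by linarith)
    obtain ⟨f₁, f₂, g₁, g₂, cf₁, cf₂, cg₁, cg₂, pf₁, pf₂, pg₁, pg₂, if₁, if₂, ig₁, ig₂, hid⟩ :=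
      aux_two_terms (-b) (-a) hab' hab2' h hh hper
    refine ⟨2, by norm_num, ![g₁, g₂], ![f₁, f₂], ?_, ?_, ?_, ?_, ?_, ?_, ?_⟩
    · intro l; fin_cases l <;> simpa
    · intro l; fin_cases l <;> simpa
    · intro l; fin_cases l <;> simpa
    · intro l; fin_cases l <;> simpa
    · intro l; fin_cases l <;> simpa
    · intro l; fin_cases l <;> simpa
    · intro s
      rw [Fin.sum_univ_two]
      simp only [Matrix.cons_val_zero, Matrix.cons_val_one, Matrix.head_cons]
      linarith [hid s]
end

section
/- Let R_ℓ(y) := ℓ·y^{2ℓ−1} + (ℓ−1)·y^{2ℓ+1} for integers ℓ ≥ 2. A real polynomial P(y) = ∑_{j=1}^{k} a_j·y^{2j+1} belongs to the ℝ-linear span of {R_ℓ : ℓ ≥ 2} if and only if ∑_{j=1}^{k} (−1)^j·j·a_j = 0; equivalently, if and only if the polynomial P̃(x) := ∑_{j=1}^{k} a_j·x^j satisfies P̃′(−1) = 0. -/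
open Polynomial

/-- `R_ℓ(y) = ℓ·y^{2ℓ−1} + (ℓ−1)·y^{2ℓ+1}`. -/
noncomputable def Rpoly (ℓ : ℕ) : Polynomial ℝ :=
  C (ℓ : ℝ) * X ^ (2 * ℓ - 1) + C ((ℓ : ℝ) - 1) * X ^ (2 * ℓ + 1)

noncomputable def fcoef (n : ℕ) : ℝ :=
  if n % 2 = 1 then (-1 : ℝ) ^ ((n - 1) / 2) * (((n - 1) / 2 : ℕ) : ℝ) else 0

noncomputable def Lfun : Polynomial ℝ →ₗ[ℝ] ℝ :=
  Polynomial.lsum (fun n => fcoef n • LinearMap.id)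

lemma fcoef_odd (j : ℕ) : fcoef (2 * j + 1) = (-1 : ℝ) ^ j * (j : ℝ) := by
  have h1 : (2 * j + 1 - 1) / 2 = j := by omega
  rw [fcoef, if_pos (by omega), h1]

lemma Lfun_monomial (n : ℕ) (c : ℝ) : Lfun (C c * X ^ n) = fcoef n * c := by
  rw [C_mul_X_pow_eq_monomial, Lfun, Polynomial.lsum_apply, Polynomial.sum_monomial_index]
  · simp [smul_eq_mul]
  · simp

lemma Lfun_R (ℓ : ℕ) (hℓ : 2 ≤ ℓ) : Lfun (Rpoly ℓ) = 0 := by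
  obtain ⟨m, rfl⟩ : ∃ m, ℓ = m + 2 := ⟨ℓ - 2, by omega⟩
  have h1 : 2 * (m + 2) - 1 = 2 * (m + 1) + 1 := by omega
  have h2 : 2 * (m + 2) + 1 = 2 * (m + 1 + 1) + 1 := by omega
  rw [Rpoly, h1, h2, map_add, Lfun_monomial, Lfun_monomial, fcoef_odd, fcoef_odd]
  push_cast
  ring

lemma Lfun_sum (k : ℕ) (a : ℕ → ℝ) :
    Lfun (∑ j ∈ Finset.Icc 1 k, C (a j) * X ^ (2 * j + 1)) =
      ∑ j ∈ Finset.Icc 1 k, (-1 : ℝ) ^ j * (j : ℝ) * a j := by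
  rw [map_sum]
  refine Finset.sum_congr rfl fun j _ => ?_
  rw [Lfun_monomial, fcoef_odd]

lemma back : ∀ (k : ℕ) (a : ℕ → ℝ),
    (∑ j ∈ Finset.Icc 1 k, (-1 : ℝ) ^ j * (j : ℝ) * a j = 0) →
    (∑ j ∈ Finset.Icc 1 k, C (a j) * X ^ (2 * j + 1)) ∈
      Submodule.span ℝ {P : Polynomial ℝ | ∃ ℓ : ℕ, 2 ≤ ℓ ∧ P = Rpoly ℓ} := by
  intro k
  induction k with
  | zero => simp
  | succ n ih =>
    intro a h
    rcases Nat.eq_zero_or_pos n with rfl | hn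
    · have h1 : a 1 = 0 := by
        simp at h; linarith
      simp [h1]
    · have hn' : (n : ℝ) ≠ 0 := Nat.cast_ne_zero.mpr (by omega)
      set c : ℝ := a (n + 1) / n with hc
      set a' : ℕ → ℝ := fun j => if j = n then a n - c * (n + 1) else a j with ha'
      have hnmem : n ∈ Finset.Icc 1 n := Finset.mem_Icc.mpr ⟨hn, le_rfl⟩
      -- the scalar condition for a'
      have hsplit : ∑ j ∈ Finset.Icc 1 (n + 1), (-1 : ℝ) ^ j * (j : ℝ) * a j =
          (∑ j ∈ Finset.Icc 1 n, (-1 : ℝ) ^ j * (j : ℝ) * a j)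
            + (-1 : ℝ) ^ (n + 1) * ((n : ℝ) + 1) * a (n + 1) := by
        rw [Finset.sum_Icc_succ_top (by omega)]
        push_cast; ring
      have hdiff : ∀ j ∈ Finset.Icc 1 n,
          (-1 : ℝ) ^ j * (j : ℝ) * a' j =
            (-1 : ℝ) ^ j * (j : ℝ) * a j
              + (if j = n then (-1 : ℝ) ^ n * (n : ℝ) * (-(c * (n + 1))) else 0) := by
        intro j hj
        by_cases hjn : j = n
        · subst hjn; simp [ha']; ring
        · simp [ha', hjn]
      have hsum : ∑ j ∈ Finset.Icc 1 n, (-1 : ℝ) ^ j * (j : ℝ) * a' j = 0 := by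
        rw [Finset.sum_congr rfl hdiff, Finset.sum_add_distrib,
          Finset.sum_ite_eq' (Finset.Icc 1 n) n
            (fun _ => (-1 : ℝ) ^ n * (n : ℝ) * (-(c * (n + 1)))), if_pos hnmem]
        rw [hsplit] at h
        have hcn : c * (n : ℝ) = a (n + 1) := div_mul_cancel₀ _ hn'
        have hp : (-1 : ℝ) ^ (n + 1) = -(-1 : ℝ) ^ n := by rw [pow_succ]; ring
        rw [hp] at h
        linear_combination h - ((-1 : ℝ) ^ n * ((n : ℝ) + 1)) * hcn
      have hmem := ih a' hsum
      have hR : Rpoly (n + 1) ∈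
          Submodule.span ℝ {P : Polynomial ℝ | ∃ ℓ : ℕ, 2 ≤ ℓ ∧ P = Rpoly ℓ} :=
        Submodule.subset_span ⟨n + 1, by omega, rfl⟩
      have e1 : ∑ j ∈ Finset.Icc 1 n, C (a' j) * X ^ (2 * j + 1) =
          (∑ j ∈ Finset.Icc 1 n, C (a j) * X ^ (2 * j + 1))
            + C (-(c * (n + 1))) * X ^ (2 * n + 1) := by
        have hd : ∀ j ∈ Finset.Icc 1 n,
            C (a' j) * X ^ (2 * j + 1) =
              C (a j) * X ^ (2 * j + 1)
                + (if j = n then C (-(c * ((n : ℝ) + 1))) * X ^ (2 * n + 1) else 0) := by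
          intro j hj
          by_cases hjn : j = n
          · subst hjn
            simp only [ha', eq_self_iff_true, if_true, if_pos rfl]
            rw [show a j - c * ((j : ℝ) + 1) = a j + (-(c * ((j:ℝ) + 1))) by ring, C_add]
            ring
          · simp [ha', hjn]
        rw [Finset.sum_congr rfl hd, Finset.sum_add_distrib,
          Finset.sum_ite_eq' (Finset.Icc 1 n) n
            (fun _ => C (-(c * ((n : ℝ) + 1))) * X ^ (2 * n + 1)), if_pos hnmem]
      have e2 : c • Rpoly (n + 1) =
          C (c * ((n : ℝ) + 1)) * X ^ (2 * n + 1) + C (a (n + 1)) * X ^ (2 * n + 3) := by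
        have h1 : 2 * (n + 1) - 1 = 2 * n + 1 := by omega
        have h2 : 2 * (n + 1) + 1 = 2 * n + 3 := by omega
        have hcn : c * (n : ℝ) = a (n + 1) := div_mul_cancel₀ _ hn'
        rw [Rpoly, h1, h2, smul_add, smul_eq_C_mul, smul_eq_C_mul, ← mul_assoc,
          ← mul_assoc, ← C_mul, ← C_mul]
        push_cast
        rw [show c * ((n : ℝ) + 1 - 1) = a (n + 1) by rw [← hcn]; ring]
      have key : ∑ j ∈ Finset.Icc 1 (n + 1), C (a j) * X ^ (2 * j + 1) =
          (∑ j ∈ Finset.Icc 1 n, C (a' j) * X ^ (2 * j + 1)) + c • Rpoly (n + 1) := by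
        rw [Finset.sum_Icc_succ_top (by omega), e1, e2]
        have h3 : 2 * (n + 1) + 1 = 2 * n + 3 := by omega
        rw [h3, map_neg]
        ring
      rw [key]
      exact Submodule.add_mem _ hmem (Submodule.smul_mem _ _ hR)

theorem mem_span_R_iff (k : ℕ) (a : ℕ → ℝ) :
    ((∑ j ∈ Finset.Icc 1 k, C (a j) * X ^ (2 * j + 1)) ∈
        Submodule.span ℝ {P : Polynomial ℝ | ∃ ℓ : ℕ, 2 ≤ ℓ ∧ P = Rpoly ℓ}
      ↔ ∑ j ∈ Finset.Icc 1 k, (-1 : ℝ) ^ j * (j : ℝ) * a j = 0) ∧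
    ((∑ j ∈ Finset.Icc 1 k, C (a j) * X ^ (2 * j + 1)) ∈
        Submodule.span ℝ {P : Polynomial ℝ | ∃ ℓ : ℕ, 2 ≤ ℓ ∧ P = Rpoly ℓ}
      ↔ Polynomial.eval (-1 : ℝ)
          (Polynomial.derivative (∑ j ∈ Finset.Icc 1 k, C (a j) * X ^ j)) = 0) := by
  have hgen : {P : Polynomial ℝ | ∃ ℓ : ℕ, 2 ≤ ℓ ∧ P = Rpoly ℓ} ⊆
      (LinearMap.ker Lfun : Submodule ℝ (Polynomial ℝ)) := by
    rintro P ⟨ℓ, hℓ, rfl⟩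
    exact Lfun_R ℓ hℓ
  have iff1 : (∑ j ∈ Finset.Icc 1 k, C (a j) * X ^ (2 * j + 1)) ∈
        Submodule.span ℝ {P : Polynomial ℝ | ∃ ℓ : ℕ, 2 ≤ ℓ ∧ P = Rpoly ℓ}
      ↔ ∑ j ∈ Finset.Icc 1 k, (-1 : ℝ) ^ j * (j : ℝ) * a j = 0 := by
    constructor
    · intro hmem
      have h0 : Lfun (∑ j ∈ Finset.Icc 1 k, C (a j) * X ^ (2 * j + 1)) = 0 :=
        (Submodule.span_le.mpr hgen) hmem
      rwa [Lfun_sum] at h0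
    · exact back k a
  have heval : Polynomial.eval (-1 : ℝ)
      (Polynomial.derivative (∑ j ∈ Finset.Icc 1 k, C (a j) * X ^ j)) =
      -∑ j ∈ Finset.Icc 1 k, (-1 : ℝ) ^ j * (j : ℝ) * a j := by
    rw [map_sum, Polynomial.eval_finset_sum, ← Finset.sum_neg_distrib]
    refine Finset.sum_congr rfl fun j hj => ?_
    obtain ⟨m, rfl⟩ : ∃ m, j = m + 1 := ⟨j - 1, by
      have := (Finset.mem_Icc.mp hj).1; omega⟩
    rw [derivative_C_mul_X_pow]
    simp only [Nat.add_sub_cancel, eval_mul, eval_C, eval_pow, eval_X]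
    push_cast
    rw [pow_succ]
    ring
  refine ⟨iff1, ?_⟩
  rw [iff1, heval, neg_eq_zero]
end

section
/- For every real polynomial Q(y) = ∑_{j=1}^{k} b_j·y^{2j+1}, every A > 0, every integer m ≥ 0 and every ε > 0, there exists a real polynomial P(y) = ∑_{j=1}^{K} a_j·y^{2j+1} with ∑_{j=1}^{K} (−1)^j·j·a_j = 0 such that |Q^{(i)}(y) − P^{(i)}(y)| < ε for all integers 0 ≤ i ≤ m and all y ∈ [−A, A]. -/
lemma myIterZero : ∀ i : ℕ, iteratedDeriv i (fun _ : ℝ => (0:ℝ)) = fun _ => 0 := by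
  intro i
  induction i with
  | zero => simp
  | succ n ih =>
    rw [iteratedDeriv_succ']
    have : deriv (fun _ : ℝ => (0:ℝ)) = fun _ => (0:ℝ) := by
      ext z; simp
    rw [this, ih]

lemma myIterAdd (i : ℕ) (f g : ℝ → ℝ) (hf : ContDiff ℝ i f) (hg : ContDiff ℝ i g) (y : ℝ) :
    iteratedDeriv i (fun z => f z + g z) y = iteratedDeriv i f y + iteratedDeriv i g y := by
  simp only [← iteratedDerivWithin_univ]
  exact iteratedDerivWithin_add (Set.mem_univ y) uniqueDiffOn_univ hf.contDiffWithinAt hg.contDiffWithinAt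

lemma myIterConstMul (i : ℕ) (c : ℝ) (f : ℝ → ℝ) (hf : ContDiff ℝ i f) (y : ℝ) :
    iteratedDeriv i (fun z => c * f z) y = c * iteratedDeriv i f y := by
  simp only [← iteratedDerivWithin_univ]
  exact iteratedDerivWithin_const_mul (Set.mem_univ y) uniqueDiffOn_univ c hf.contDiffWithinAt

lemma myIterMulBound (f h : ℝ → ℝ) (hf : ContDiff ℝ (⊤ : ℕ∞) f) (hh : ContDiff ℝ (⊤ : ℕ∞) h) (i : ℕ) (y : ℝ) :
    |iteratedDeriv i (fun z => f z * h z) y| ≤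
      ∑ j ∈ Finset.range (i + 1),
        (i.choose j : ℝ) * |iteratedDeriv j f y| * |iteratedDeriv (i - j) h y| := by
  have := norm_iteratedFDeriv_mul_le hf hh y (n := i) (by exact_mod_cast (le_top : (i : ℕ∞) ≤ ⊤))
  simpa [norm_iteratedFDeriv_eq_norm_iteratedDeriv, Real.norm_eq_abs] using this

lemma myIterConst (c : ℝ) : ∀ i : ℕ, 1 ≤ i → iteratedDeriv i (fun _ : ℝ => c) = fun _ => 0 := by
  rintro (_|i) h
  · omega
  · rw [iteratedDeriv_succ']
    have : deriv (fun _ : ℝ => c) = fun _ : ℝ => (0:ℝ) := by ext z; simp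
    rw [this, myIterZero]

lemma myPowBound (g : ℝ → ℝ) (hg : ContDiff ℝ (⊤ : ℕ∞) g) (K : ℝ) (hK : 0 ≤ K) (s : Set ℝ)
    (hb : ∀ j : ℕ, ∀ y ∈ s, |iteratedDeriv j g y| ≤ K ^ j) :
    ∀ n i : ℕ, ∀ y ∈ s, |iteratedDeriv i (fun z => (g z) ^ n) y| ≤ ((n : ℝ) * K) ^ i := by
  intro n
  induction n with
  | zero =>
    rintro (_|i) y hy
    · simp
    · have : (fun z : ℝ => (g z) ^ 0) = fun _ : ℝ => (1:ℝ) := by ext z; simp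
      rw [this, myIterConst 1 (i+1) (by omega)]
      simp
  | succ n ih =>
    intro i y hy
    have hfun : (fun z : ℝ => (g z) ^ (n+1)) = fun z => g z * (g z) ^ n := by
      ext z; rw [pow_succ']
    rw [hfun]
    have h1 := myIterMulBound g (fun z => (g z) ^ n) hg (hg.pow n) i y
    have h2 : ∑ j ∈ Finset.range (i + 1),
        (i.choose j : ℝ) * |iteratedDeriv j g y| * |iteratedDeriv (i - j) (fun z => (g z)^n) y|
        ≤ ∑ j ∈ Finset.range (i + 1),
        K ^ j * ((n:ℝ) * K) ^ (i - j) * (i.choose j : ℝ) := by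
      apply Finset.sum_le_sum
      intro j hj
      have hbj := hb j y hy
      have hij := ih (i - j) y hy
      have c0 : (0:ℝ) ≤ (i.choose j : ℝ) := by positivity
      calc (i.choose j : ℝ) * |iteratedDeriv j g y| * |iteratedDeriv (i - j) (fun z => (g z)^n) y|
          ≤ (i.choose j : ℝ) * (K ^ j) * (((n:ℝ) * K) ^ (i-j)) := by
            apply mul_le_mul _ hij (abs_nonneg _) (by positivity)
            exact mul_le_mul_of_nonneg_left hbj c0
        _ = K ^ j * ((n:ℝ) * K) ^ (i - j) * (i.choose j : ℝ) := by ring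
    have h3 : ∑ j ∈ Finset.range (i + 1),
        K ^ j * ((n:ℝ) * K) ^ (i - j) * (i.choose j : ℝ) = (K + (n:ℝ) * K) ^ i :=
      (add_pow K ((n:ℝ) * K) i).symm
    have h4 : (K + (n:ℝ) * K) = ((n:ℝ)+1) * K := by ring
    calc |iteratedDeriv i (fun z => g z * (g z)^n) y| ≤ _ := h1
      _ ≤ (K + (n:ℝ)*K) ^ i := h2.trans_eq h3
      _ = (((n:ℕ)+1 : ℝ) * K) ^ i := by rw [h4]
      _ = (((n+1 : ℕ) : ℝ) * K) ^ i := by norm_num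

lemma gIter (x : ℝ) : ∀ j : ℕ, iteratedDeriv j (fun z : ℝ => x * z^2 - 1)
    = if j = 0 then (fun z : ℝ => x * z^2 - 1) else if j = 1 then (fun z => 2*x*z)
      else if j = 2 then (fun _ => 2*x) else fun _ => 0 := by
  have d1 : deriv (fun z : ℝ => x * z^2 - 1) = fun z => 2 * x * z := by
    ext z
    rw [deriv_fun_sub (f := fun z : ℝ => x * z^2) ((differentiable_const x).mul (differentiable_pow 2)).differentiableAt
      (differentiable_const 1).differentiableAt]
    rw [deriv_const_mul _ (differentiable_pow 2).differentiableAt]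
    simp [deriv_pow_field]; ring
  have d2 : deriv (fun z : ℝ => 2 * x * z) = fun _ => 2 * x := by
    ext z
    rw [deriv_const_mul _ differentiable_fun_id.differentiableAt]
    simp
  have d3 : deriv (fun _ : ℝ => 2 * x) = fun _ : ℝ => (0:ℝ) := by ext z; simp
  intro j
  induction j with
  | zero => simp
  | succ jj ih =>
    rw [iteratedDeriv_succ, ih]
    rcases jj with _|_|_|jj
    · norm_num [d1]
    · norm_num [d2]
    · norm_num [d3]
    · rw [if_neg (by omega), if_neg (by omega)]
      ext z; simp

lemma cubeIter : ∀ j : ℕ, iteratedDeriv j (fun z : ℝ => z^3)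
    = if j = 0 then (fun z : ℝ => z^3) else if j = 1 then (fun z => 3*z^2)
      else if j = 2 then (fun z => 6*z) else if j = 3 then (fun _ => 6) else fun _ => 0 := by
  have d1 : deriv (fun z : ℝ => z^3) = fun z => 3 * z^2 := by
    ext z; simp [deriv_pow_field]
  have d2 : deriv (fun z : ℝ => 3 * z^2) = fun z => 6 * z := by
    ext z
    rw [deriv_const_mul _ (differentiable_pow 2).differentiableAt]
    simp [deriv_pow_field]; ring
  have d3 : deriv (fun z : ℝ => 6 * z) = fun _ : ℝ => (6:ℝ) := by
    ext z
    rw [deriv_const_mul _ differentiable_fun_id.differentiableAt]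
    simp
  have d4 : deriv (fun _ : ℝ => (6:ℝ)) = fun _ : ℝ => (0:ℝ) := by ext z; simp
  intro j
  induction j with
  | zero => simp
  | succ jj ih =>
    rw [iteratedDeriv_succ, ih]
    rcases jj with _|_|_|_|jj
    · norm_num [d1]
    · norm_num [d2]
    · norm_num [d3]
    · norm_num [d4]
    · rw [if_neg (by omega), if_neg (by omega), if_neg (by omega), if_neg (by omega)]
      ext z; simp

lemma sumIccOne (f : ℕ → ℝ) (n : ℕ) :
    ∑ j ∈ Finset.Icc 1 (n+1), f j = ∑ j ∈ Finset.range (n+1), f (j+1) := by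
  rw [← Finset.Ico_add_one_right_eq_Icc, Finset.sum_Ico_eq_sum_range]
  simp [add_comm]

lemma gDerivBound (B x : ℝ) (hB : 1 ≤ B) (hx : x = (B^2)⁻¹) :
    ∀ j : ℕ, ∀ y : ℝ, |y| ≤ B → |iteratedDeriv j (fun z : ℝ => x * z^2 - 1) y| ≤ (2*x*B)^j := by
  have hB0 : (0:ℝ) < B := lt_of_lt_of_le one_pos hB
  have hx0 : 0 < x := by rw [hx]; positivity
  have hxB2 : x * B^2 = 1 := by rw [hx]; field_simp
  intro j y hy
  rw [gIter x j]
  split_ifs with h0 h1 h2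
  · subst h0
    rw [pow_zero]
    show |x * y^2 - 1| ≤ 1
    have hy2 : y^2 ≤ B^2 := by nlinarith [sq_abs y, abs_nonneg y]
    rw [abs_le]
    constructor <;> nlinarith [mul_nonneg hx0.le (sq_nonneg y)]
  · subst h1
    rw [pow_one]
    calc |2*x*y| = 2*x*|y| := by rw [abs_mul, abs_of_pos (by positivity)]
      _ ≤ 2*x*B := by nlinarith
  · subst h2
    show |2 * x| ≤ (2*x*B)^2
    rw [abs_of_pos (by positivity)]
    nlinarith [hxB2, hx0.le]
  · simp only [abs_zero]
    positivity

lemma cubeDerivBound (B : ℝ) (hB : 1 ≤ B) :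
    ∀ j : ℕ, ∀ y : ℝ, |y| ≤ B → |iteratedDeriv j (fun z : ℝ => z^3) y| ≤ 6 * B^3 := by
  have hB0 : (0:ℝ) < B := lt_of_lt_of_le one_pos hB
  have hB2 : B^2 ≤ B^3 := by nlinarith
  have hB13 : 1 ≤ B^3 := by nlinarith
  have hBB : B ≤ B^3 := by nlinarith
  intro j y hy
  have hay : 0 ≤ |y| := abs_nonneg y
  rw [cubeIter j]
  split_ifs
  · have : |y^3| = |y|^3 := by rw [abs_pow]
    rw [this]
    nlinarith [pow_le_pow_left₀ hay hy 3]
  · calc |3*y^2| = 3*|y|^2 := by rw [abs_mul, abs_pow]; norm_num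
      _ ≤ 3*B^2 := by nlinarith [pow_le_pow_left₀ hay hy 2]
      _ ≤ 6*B^3 := by nlinarith
  · calc |6*y| = 6*|y| := by rw [abs_mul]; norm_num
      _ ≤ 6*B := by nlinarith
      _ ≤ 6*B^3 := by nlinarith
  · rw [abs_of_pos (by norm_num : (0:ℝ) < 6)]; nlinarith
  · simp only [abs_zero]; positivity

lemma myTBound (B x : ℝ) (hB : 1 ≤ B) (hx : x = (B^2)⁻¹) (n i : ℕ) (y : ℝ) (hy : |y| ≤ B) :
    |iteratedDeriv i (fun z : ℝ => z^3 * (x * z^2 - 1)^n) y|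
      ≤ 6 * B^3 * (1 + (n:ℝ) * (2*x*B))^i := by
  have hB0 : (0:ℝ) < B := lt_of_lt_of_le one_pos hB
  have hx0 : 0 < x := by rw [hx]; positivity
  have hK0 : (0:ℝ) ≤ 2*x*B := by positivity
  have hcube : ContDiff ℝ (⊤ : ℕ∞) (fun z : ℝ => z^3) := by fun_prop
  have hg : ContDiff ℝ (⊤ : ℕ∞) (fun z : ℝ => x * z^2 - 1) := by fun_prop
  have h1 := myIterMulBound (fun z => z^3) (fun z => (x * z^2 - 1)^n) hcube (hg.pow n) i y
  have hpow := myPowBound _ hg (2*x*B) hK0 {w : ℝ | |w| ≤ B}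
    (fun j w hw => gDerivBound B x hB hx j w hw) n
  have hcb := cubeDerivBound B hB
  have h2 : ∑ j ∈ Finset.range (i + 1),
      (i.choose j : ℝ) * |iteratedDeriv j (fun z : ℝ => z^3) y|
        * |iteratedDeriv (i - j) (fun z : ℝ => (x * z^2 - 1)^n) y|
      ≤ ∑ j ∈ Finset.range (i + 1),
      (6*B^3) * ((1:ℝ)^j * ((n:ℝ)*(2*x*B))^(i-j) * (i.choose j : ℝ)) := by
    apply Finset.sum_le_sum
    intro j hj
    have hc := hcb j y hy
    have hp := hpow (i - j) y hy
    have c0 : (0:ℝ) ≤ (i.choose j : ℝ) := by positivity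
    calc (i.choose j : ℝ) * |iteratedDeriv j (fun z : ℝ => z^3) y|
          * |iteratedDeriv (i - j) (fun z : ℝ => (x * z^2 - 1)^n) y|
        ≤ (i.choose j : ℝ) * (6*B^3) * (((n:ℝ)*(2*x*B))^(i-j)) := by
          apply mul_le_mul _ hp (abs_nonneg _) (by positivity)
          exact mul_le_mul_of_nonneg_left hc c0
      _ = (6*B^3) * ((1:ℝ)^j * ((n:ℝ)*(2*x*B))^(i-j) * (i.choose j : ℝ)) := by
          rw [one_pow]; ring
  have h3 : ∑ j ∈ Finset.range (i + 1),
      (6*B^3) * ((1:ℝ)^j * ((n:ℝ)*(2*x*B))^(i-j) * (i.choose j : ℝ))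
      = 6*B^3 * (1 + (n:ℝ)*(2*x*B))^i := by
    rw [← Finset.mul_sum, ← add_pow]
  exact (h1.trans h2).trans_eq h3


set_option maxHeartbeats 2000000 in
/-- every odd polynomial `Q(y) = ∑_{j=1}^k b_j y^{2j+1}` with `Q′(0)=0` can be
approximated, together with its derivatives up to any given order `m`, uniformly on any
segment `[−A,A]`, by odd polynomials `P(y) = ∑_{j=1}^K a_j y^{2j+1}` whose coefficients
satisfy `∑_{j=1}^K (−1)^j·j·a_j = 0`. -/
theorem approx_by_constrained_odd_polynomials (k : ℕ) (b : ℕ → ℝ)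
    (A : ℝ) (hA : 0 < A) (m : ℕ) (ε : ℝ) (hε : 0 < ε) :
    ∃ (K : ℕ) (a : ℕ → ℝ),
      (∑ j ∈ Finset.Icc 1 K, (-1 : ℝ) ^ j * (j : ℝ) * a j = 0) ∧
      ∀ i ≤ m, ∀ y ∈ Set.Icc (-A) A,
        |iteratedDeriv i (fun y : ℝ => ∑ j ∈ Finset.Icc 1 k, b j * y ^ (2 * j + 1)) y
          - iteratedDeriv i (fun y : ℝ => ∑ j ∈ Finset.Icc 1 K, a j * y ^ (2 * j + 1)) y|
          < ε := by
  set B : ℝ := max A 1 with hBdef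
  have hB1 : (1:ℝ) ≤ B := le_max_right _ _
  have hB0 : (0:ℝ) < B := lt_of_lt_of_le one_pos hB1
  have hAB : A ≤ B := le_max_left _ _
  set x : ℝ := (B^2)⁻¹ with hxdef
  have hx0 : 0 < x := by rw [hxdef]; positivity
  have hxB2 : x * B^2 = 1 := by rw [hxdef]; field_simp
  have hK2 : 2*x*B ≤ 2 := by nlinarith [hxB2, hx0.le]
  set S : ℝ := ∑ j ∈ Finset.Icc 1 k, (-1:ℝ)^j * (j:ℝ) * b j with hSdef
  set D : ℝ := 6 * B^3 * 3^m * (|S|+1) with hDdef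
  have hD0 : 0 < D := by rw [hDdef]; positivity
  have hr : (1:ℝ) < 1 + x := by linarith
  obtain ⟨n, hn1, hnsmall⟩ : ∃ n : ℕ, 1 ≤ n ∧ (n:ℝ)^m / (1+x)^n < ε / D := by
    have h := tendsto_pow_const_div_const_pow_of_one_lt m hr
    have h2 := h.eventually (gt_mem_nhds (by positivity : (0:ℝ) < ε / D))
    obtain ⟨n, hn, hn'⟩ := (h2.and (Filter.eventually_ge_atTop 1)).exists
    exact ⟨n, hn', hn⟩
  have hn1' : (1:ℝ) ≤ (n:ℝ) := by exact_mod_cast hn1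
  set Λ : ℝ := ∑ j ∈ Finset.range (n+1), ((j:ℝ)+1) * (n.choose j : ℝ) * x^j with hLdef
  have hΛlb : (1+x)^n ≤ Λ := by
    have hbin : (x+1)^n = ∑ j ∈ Finset.range (n+1), x^j * 1^(n-j) * (n.choose j : ℝ) :=
      add_pow x 1 n
    have : (1+x)^n = ∑ j ∈ Finset.range (n+1), x^j * 1^(n-j) * (n.choose j : ℝ) := by
      rw [← hbin]; ring_nf
    rw [this, hLdef]
    apply Finset.sum_le_sum
    intro j hj
    have h1 : (0:ℝ) ≤ (j:ℝ) * ((n.choose j : ℝ) * x^j) := by positivity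
    rw [one_pow]
    nlinarith [h1]
  have hΛ0 : 0 < Λ := lt_of_lt_of_le (by positivity) hΛlb
  set c : ℝ := S * (-1:ℝ)^n / Λ with hcdef
  have hcabs : |c| = |S| / Λ := by
    rw [hcdef, abs_div, abs_mul, abs_pow, abs_neg, abs_one, one_pow, mul_one, abs_of_pos hΛ0]
  set t : ℕ → ℝ := fun l =>
    if l ∈ Finset.Icc 1 (n+1) then ((n.choose (l-1) : ℝ) * (-1:ℝ)^(n-(l-1)) * x^(l-1)) else 0
    with htdef
  set KK : ℕ := max k (n+1) with hKKdef
  set a : ℕ → ℝ := fun j => (if j ∈ Finset.Icc 1 k then b j else 0) + c * t j with hadef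
  have ht1 : ∀ j : ℕ, j ∈ Finset.range (n+1) →
      t (j+1) = (n.choose j : ℝ) * (-1:ℝ)^(n-j) * x^j := by
    intro j hj
    have hjn : j ≤ n := by have := Finset.mem_range.mp hj; omega
    rw [htdef]
    simp only
    rw [if_pos (by simp only [Finset.mem_Icc]; omega)]
    simp
  refine ⟨KK, a, ?_, ?_⟩
  · -- constraint
    have split : ∑ j ∈ Finset.Icc 1 KK, (-1:ℝ)^j * (j:ℝ) * a j
        = (∑ j ∈ Finset.Icc 1 KK, (-1:ℝ)^j * (j:ℝ) * (if j ∈ Finset.Icc 1 k then b j else 0))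
          + c * ∑ j ∈ Finset.Icc 1 KK, (-1:ℝ)^j * (j:ℝ) * t j := by
      rw [Finset.mul_sum, ← Finset.sum_add_distrib]
      apply Finset.sum_congr rfl
      intro j hj
      rw [hadef]
      ring
    rw [split]
    have part1 : ∑ j ∈ Finset.Icc 1 KK, (-1:ℝ)^j * (j:ℝ) * (if j ∈ Finset.Icc 1 k then b j else 0)
        = S := by
      rw [hSdef, ← Finset.sum_subset (Finset.Icc_subset_Icc_right (le_max_left k (n+1)))
        (fun j _ hnj => by rw [if_neg hnj, mul_zero])]
      apply Finset.sum_congr rfl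
      intro j hj
      rw [if_pos hj]
    have part2 : ∑ j ∈ Finset.Icc 1 KK, (-1:ℝ)^j * (j:ℝ) * t j = (-1:ℝ)^(n+1) * Λ := by
      have tz : ∀ j ∈ Finset.Icc 1 KK, j ∉ Finset.Icc 1 (n+1) → (-1:ℝ)^j * (j:ℝ) * t j = 0 := by
        intro j _ hnj
        rw [htdef]
        simp only
        rw [if_neg hnj, mul_zero]
      rw [← Finset.sum_subset (Finset.Icc_subset_Icc_right (le_max_right k (n+1))) tz]
      rw [sumIccOne (fun j => (-1:ℝ)^j * (j:ℝ) * t j) n, hLdef, Finset.mul_sum]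
      apply Finset.sum_congr rfl
      intro j hj
      have hjn : j ≤ n := by have := Finset.mem_range.mp hj; omega
      rw [ht1 j hj]
      have hsign : ((-1:ℝ))^(j+1) * (-1:ℝ)^(n-j) = (-1:ℝ)^(n+1) := by
        rw [← pow_add]
        congr 1
        omega
      push_cast
      linear_combination (((j:ℝ)+1) * (n.choose j : ℝ) * x^j) * hsign
    rw [part1, part2]
    have h1 : ((-1:ℝ))^n * (-1:ℝ)^(n+1) = -1 := by
      rw [← pow_add]
      exact Odd.neg_one_pow ⟨n, by ring⟩
    rw [hcdef]
    have hΛne : Λ ≠ 0 := hΛ0.ne'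
    calc S + S * (-1:ℝ)^n / Λ * ((-1:ℝ)^(n+1) * Λ)
        = S + S * ((-1:ℝ)^n * (-1:ℝ)^(n+1)) * (Λ / Λ) := by ring
      _ = 0 := by rw [h1, div_self hΛne]; ring
  · -- approximation
    intro i him y hy
    set Qf : ℝ → ℝ := fun y : ℝ => ∑ j ∈ Finset.Icc 1 k, b j * y ^ (2 * j + 1) with hQfdef
    set Tf : ℝ → ℝ := fun z : ℝ => z^3 * (x * z^2 - 1)^n with hTfdef
    have hQc : ContDiff ℝ (⊤ : ℕ∞) Qf := by
      rw [hQfdef]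
      apply ContDiff.sum
      intro j _
      exact contDiff_const.mul (contDiff_id.pow _)
    have hTc : ContDiff ℝ (⊤ : ℕ∞) Tf := by
      rw [hTfdef]
      exact (contDiff_id.pow _).mul (((contDiff_const.mul (contDiff_id.pow _)).sub
        contDiff_const).pow _)
    have hfun : (fun y : ℝ => ∑ j ∈ Finset.Icc 1 KK, a j * y ^ (2 * j + 1))
        = fun y : ℝ => Qf y + c * Tf y := by
      funext z
      have split2 : ∑ j ∈ Finset.Icc 1 KK, a j * z ^ (2 * j + 1)
          = (∑ j ∈ Finset.Icc 1 KK, (if j ∈ Finset.Icc 1 k then b j else 0) * z ^ (2 * j + 1))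
            + c * ∑ j ∈ Finset.Icc 1 KK, t j * z ^ (2 * j + 1) := by
        rw [Finset.mul_sum, ← Finset.sum_add_distrib]
        apply Finset.sum_congr rfl
        intro j hj
        rw [hadef]
        ring
      rw [split2]
      congr 1
      · rw [hQfdef, ← Finset.sum_subset (Finset.Icc_subset_Icc_right (le_max_left k (n+1)))
          (fun j _ hnj => by rw [if_neg hnj, zero_mul])]
        apply Finset.sum_congr rfl
        intro j hj
        rw [if_pos hj]
      · congr 1
        have tz : ∀ j ∈ Finset.Icc 1 KK, j ∉ Finset.Icc 1 (n+1) → t j * z ^ (2 * j + 1) = 0 := by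
          intro j _ hnj
          rw [htdef]
          simp only
          rw [if_neg hnj, zero_mul]
        rw [← Finset.sum_subset (Finset.Icc_subset_Icc_right (le_max_right k (n+1))) tz]
        rw [sumIccOne (fun j => t j * z ^ (2 * j + 1)) n, hTfdef]
        simp only
        rw [show x * z^2 - 1 = x*z^2 + (-1) by ring, add_pow, Finset.mul_sum]
        apply Finset.sum_congr rfl
        intro j hj
        rw [ht1 j hj, mul_pow, ← pow_mul]
        ring
    rw [hfun]
    have key : iteratedDeriv i (fun z : ℝ => Qf z + c * Tf z) y
        = iteratedDeriv i Qf y + c * iteratedDeriv i Tf y := by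
      have h1 := myIterAdd i Qf (fun z => c * Tf z) (hQc.of_le (by exact_mod_cast le_top))
        ((contDiff_const.mul hTc).of_le (by exact_mod_cast le_top)) y
      have h2 := myIterConstMul i c Tf (hTc.of_le (by exact_mod_cast le_top)) y
      exact h1.trans (by rw [h2])
    rw [key]
    have habs : |iteratedDeriv i Qf y - (iteratedDeriv i Qf y + c * iteratedDeriv i Tf y)|
        = |c| * |iteratedDeriv i Tf y| := by
      rw [show iteratedDeriv i Qf y - (iteratedDeriv i Qf y + c * iteratedDeriv i Tf y)
        = -(c * iteratedDeriv i Tf y) by ring, abs_neg, abs_mul]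
    rw [habs, hcabs]
    have hyB : |y| ≤ B := by
      rw [abs_le]
      exact ⟨by linarith [hy.1], by linarith [hy.2]⟩
    have hT := myTBound B x hB1 hxdef n i y hyB
    have hTf' : |iteratedDeriv i Tf y| ≤ 6*B^3*(1+(n:ℝ)*(2*x*B))^i := by
      rw [hTfdef]
      exact hT
    have e1 : (1+(n:ℝ)*(2*x*B))^i ≤ (3*(n:ℝ))^m := by
      have h1 : (1:ℝ)+(n:ℝ)*(2*x*B) ≤ 1+2*(n:ℝ) := by nlinarith [Nat.cast_nonneg (α := ℝ) n]
      have h2 : (1:ℝ)+2*(n:ℝ) ≤ 3*(n:ℝ) := by linarith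
      have h3 : (1:ℝ) ≤ 3*(n:ℝ) := by linarith
      calc (1+(n:ℝ)*(2*x*B))^i ≤ (1+2*(n:ℝ))^i := pow_le_pow_left₀ (by positivity) h1 i
        _ ≤ (3*(n:ℝ))^i := pow_le_pow_left₀ (by positivity) h2 i
        _ ≤ (3*(n:ℝ))^m := pow_le_pow_right₀ h3 him
    calc |S| / Λ * |iteratedDeriv i Tf y|
        ≤ |S| / Λ * (6*B^3*(1+(n:ℝ)*(2*x*B))^i) := by
          apply mul_le_mul_of_nonneg_left hTf' (by positivity)
      _ ≤ |S| / (1+x)^n * (6*B^3*(3*(n:ℝ))^m) := by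
          apply mul_le_mul
          · exact div_le_div_of_nonneg_left (abs_nonneg S) (pow_pos (by linarith) n) hΛlb
          · apply mul_le_mul_of_nonneg_left e1 (by positivity)
          · positivity
          · positivity
      _ = (|S| * (6*B^3*3^m)) * ((n:ℝ)^m/(1+x)^n) := by
          rw [mul_pow]
          ring
      _ ≤ D * ((n:ℝ)^m/(1+x)^n) := by
          apply mul_le_mul_of_nonneg_right _ (by positivity)
          rw [hDdef, mul_comm (|S|) (6*B^3*3^m)]
          exact mul_le_mul_of_nonneg_left (by linarith [abs_nonneg S]) (by positivity)
      _ < D * (ε/D) := by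
          exact mul_lt_mul_of_pos_left hnsmall hD0
      _ = ε := by field_simp
end

section
/- For all smooth functions f, g : ℝ^n → ℝ, one has, on ℝ^n × B: {f(z)·√(1−‖w‖²), g(z)·√(1−‖w‖²)} = ∑_{j=1}^n (g(z)·∂f/∂z_j(z) − f(z)·∂g/∂z_j(z))·w_j, i.e., the Poisson bracket of the two functions equals the fiberwise-linear function given by the 1-form g·df − f·dg evaluated on w. -/
open Real

/-- The Poisson bracket `{F,G} = ∑_j (∂F/∂w_j·∂G/∂z_j − ∂F/∂z_j·∂G/∂w_j)` of smooth
functions on (an open subset of) `ℝ^n_z × ℝ^n_w`. -/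
noncomputable def pbn {n : ℕ}
    (F G : EuclideanSpace ℝ (Fin n) × EuclideanSpace ℝ (Fin n) → ℝ)
    (p : EuclideanSpace ℝ (Fin n) × EuclideanSpace ℝ (Fin n)) : ℝ :=
  ∑ j : Fin n,
    (fderiv ℝ F p (0, EuclideanSpace.single j 1) * fderiv ℝ G p (EuclideanSpace.single j 1, 0)
      - fderiv ℝ F p (EuclideanSpace.single j 1, 0) * fderiv ℝ G p (0, EuclideanSpace.single j 1))

open scoped InnerProductSpace

lemma hasFDerivAt_sqrt_one_sub {n : ℕ} (w : EuclideanSpace ℝ (Fin n)) (hw : ‖w‖ < 1) :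
    HasFDerivAt (fun w : EuclideanSpace ℝ (Fin n) => Real.sqrt (1 - ‖w‖ ^ 2))
      ((-(Real.sqrt (1 - ‖w‖ ^ 2))⁻¹) • (innerSL ℝ w)) w := by
  have h1 : (0:ℝ) < 1 - ‖w‖ ^ 2 := by nlinarith [norm_nonneg w]
  have hs : (0:ℝ) < Real.sqrt (1 - ‖w‖ ^ 2) := Real.sqrt_pos.2 h1
  have hsq : HasDerivAt Real.sqrt (1 / (2 * Real.sqrt (1 - ‖w‖ ^ 2))) (1 - ‖w‖ ^ 2) :=
    Real.hasDerivAt_sqrt h1.ne'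
  have hn : HasFDerivAt (fun w : EuclideanSpace ℝ (Fin n) => 1 - ‖w‖ ^ 2)
      (-(2 • (innerSL ℝ w))) w := by
    simpa using ((hasStrictFDerivAt_norm_sq w).hasFDerivAt).const_sub (1:ℝ)
  have := hsq.comp_hasFDerivAt w hn
  refine this.congr_fderiv ?_
  ext v
  simp only [ContinuousLinearMap.smul_apply, ContinuousLinearMap.comp_apply,
    ContinuousLinearMap.neg_apply, ContinuousLinearMap.smul_apply,
    ContinuousLinearMap.smul_apply, smul_eq_mul]
  field_simp
  ring

lemma fderiv_mul_sqrt {n : ℕ} (f : EuclideanSpace ℝ (Fin n) → ℝ)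
    (hf : ContDiff ℝ (⊤ : ℕ∞) f) (p : EuclideanSpace ℝ (Fin n) × EuclideanSpace ℝ (Fin n))
    (hp : ‖p.2‖ < 1) :
    HasFDerivAt (fun q : EuclideanSpace ℝ (Fin n) × EuclideanSpace ℝ (Fin n) =>
        f q.1 * Real.sqrt (1 - ‖q.2‖ ^ 2))
      (f p.1 • (((-(Real.sqrt (1 - ‖p.2‖ ^ 2))⁻¹) • (innerSL ℝ p.2)).comp
          (ContinuousLinearMap.snd ℝ _ _))
        + Real.sqrt (1 - ‖p.2‖ ^ 2) • ((fderiv ℝ f p.1).comp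
          (ContinuousLinearMap.fst ℝ (EuclideanSpace ℝ (Fin n)) (EuclideanSpace ℝ (Fin n))))) p := by
  have h1 : HasFDerivAt (fun q : EuclideanSpace ℝ (Fin n) × EuclideanSpace ℝ (Fin n) => f q.1)
      ((fderiv ℝ f p.1).comp (ContinuousLinearMap.fst ℝ _ _)) p :=
    (hf.differentiable (by simp) p.1).hasFDerivAt.comp p (hasFDerivAt_fst)
  have h2 := (hasFDerivAt_sqrt_one_sub p.2 hp).comp p
    (hasFDerivAt_snd (p := p) (𝕜 := ℝ))
  exact h1.mul h2


/-- `{f(z)·√(1−‖w‖²), g(z)·√(1−‖w‖²)} = ∑_j (g·∂f/∂z_j − f·∂g/∂z_j)·w_j`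
on `ℝ^n × B`, i.e. the bracket is the fiberwise-linear function given by the 1-form
`g·df − f·dg` evaluated on `w`. -/
theorem poisson_bracket_H0 (n : ℕ) (f g : EuclideanSpace ℝ (Fin n) → ℝ)
    (hf : ContDiff ℝ (⊤ : ℕ∞) f) (hg : ContDiff ℝ (⊤ : ℕ∞) g) :
    ∀ p : EuclideanSpace ℝ (Fin n) × EuclideanSpace ℝ (Fin n), ‖p.2‖ < 1 →
      pbn (fun q => f q.1 * Real.sqrt (1 - ‖q.2‖ ^ 2))
          (fun q => g q.1 * Real.sqrt (1 - ‖q.2‖ ^ 2)) p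
        = ∑ j : Fin n,
            (g p.1 * fderiv ℝ f p.1 (EuclideanSpace.single j 1)
              - f p.1 * fderiv ℝ g p.1 (EuclideanSpace.single j 1)) * p.2 j := by
  intro p hp
  have h1 : (0:ℝ) < 1 - ‖p.2‖ ^ 2 := by nlinarith [norm_nonneg p.2]
  have hs : (0:ℝ) < Real.sqrt (1 - ‖p.2‖ ^ 2) := Real.sqrt_pos.2 h1
  have hF := (fderiv_mul_sqrt f hf p hp).fderiv
  have hG := (fderiv_mul_sqrt g hg p hp).fderiv
  unfold pbn
  rw [hF, hG]
  apply Finset.sum_congr rfl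
  intro j _
  have hinner : ⟪p.2, EuclideanSpace.single j 1⟫_ℝ = p.2 j := by
    simp [EuclideanSpace.inner_single_right]
  simp only [ContinuousLinearMap.add_apply, ContinuousLinearMap.smul_apply,
    ContinuousLinearMap.comp_apply, ContinuousLinearMap.coe_snd', ContinuousLinearMap.coe_fst',
    map_zero, smul_eq_mul, mul_zero, add_zero, zero_add, innerSL_apply_apply, hinner]
  field_simp
  ring
end

section
/- For N ≥ 1 and k ≥ 1, the kernel of Φ_k has a basis consisting of the tuples Q_{m,i,j} ∈ (𝒫^k)^N, indexed by multi-indices m ∈ ℕ^N with |m| = k−1 and pairs of indices 1 ≤ i < j ≤ N with j ≥ max{ℓ : m_ℓ > 0}, where Q_{m,i,j} has j-th component y^m·y_i, i-th component −y^m·y_j, and all other components zero. In particular, ker Φ_k is spanned over ℝ by the tuples y^m·(y_i·e_j − y_j·e_i) over all multi-indices m with |m| = k−1 and all pairs i ≠ j (e_i denoting the i-th standard basis tuple). -/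
/-!
Euler's identity `∑ᵢ yᵢ ∂ᵢPⱼ = k Pⱼ` and the derivative `Pₗ + ∑ⱼ yⱼ ∂ₗPⱼ = 0` of the syzygy
relation give `(k + 1) P = ∑ᵢⱼ ∂ᵢPⱼ · (yᵢ eⱼ − yⱼ eᵢ)`, so the `Q_{m,i,j}` with `i ≠ j` span
`ker Φ_k`. The relation
`y_l (y_i e_j − y_j e_i) = y_j (y_i e_l − y_l e_i) − y_i (y_j e_l − y_l e_j)`
moves every variable `y_l` with `l > j` out of `y^m`, so the `Q_{m,i,j}` with
`j ≥ max supp m` already span. They are independent: when `j ≥ max supp m`, `j` is the largest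
index of `m + e_j`, which forces the coefficient of `y^{m+e_j}` in the `i`-th component of a
basis vector `Q_{m',i',j'}` to vanish unless `(m', i', j') = (m, i, j)`.
-/

open MvPolynomial

/-- The tuple `Q_{m,i,j} = y^m·(y_i·e_j − y_j·e_i)` in `(𝒫^k)^N`. -/
noncomputable def Qv (N : ℕ) (m : Fin N →₀ ℕ) (i j : Fin N) :
    Fin N → MvPolynomial (Fin N) ℝ :=
  Pi.single j (monomial m 1 * X i) - Pi.single i (monomial m 1 * X j)

/-- The index set for the basis of `ker Φ_k`: multi-indices `m` with `|m| = k−1` and pairs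
`i < j` with `j ≥ max{ℓ : m_ℓ > 0}`. -/
def BasisIdx (N k : ℕ) : Type :=
  {q : (Fin N →₀ ℕ) × Fin N × Fin N //
    (q.1.sum fun _ e => e) = k - 1 ∧ q.2.1 < q.2.2 ∧ ∀ l : Fin N, q.1 l ≠ 0 → l ≤ q.2.2}

section Koszul

variable {σ R : Type*} [CommRing R] [DecidableEq σ]

/-- The Koszul differential of `B·eᵢ ∧ eⱼ`. -/
noncomputable def koszulVec (i j : σ) : MvPolynomial σ R →ₗ[R] σ → MvPolynomial σ R :=
  LinearMap.single R _ j ∘ₗ LinearMap.mulRight R (X i) -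
    LinearMap.single R _ i ∘ₗ LinearMap.mulRight R (X j)

theorem koszulVec_apply (i j : σ) (B : MvPolynomial σ R) :
    koszulVec i j B = Pi.single j (B * X i) - Pi.single i (B * X j) :=
  rfl

theorem koszulVec_mul_X (i j l : σ) (B : MvPolynomial σ R) :
    koszulVec i j (B * X l) = koszulVec i l (B * X j) - koszulVec j l (B * X i) := by
  funext a
  simp only [koszulVec_apply, Pi.sub_apply, Pi.single_apply]
  split_ifs <;> ring

@[simp]
theorem koszulVec_self (i : σ) (B : MvPolynomial σ R) : koszulVec i i B = 0 :=
  sub_self _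

variable [Fintype σ]

variable (σ R) in
/-- `ker Φ_k`. -/
noncomputable def homogeneousSyzygies (k : ℕ) : Submodule R (σ → MvPolynomial σ R) where
  carrier := {P | (∀ j, P j ∈ homogeneousSubmodule σ R k) ∧ ∑ j, X j * P j = 0}
  add_mem' {P Q} hP hQ :=
    ⟨fun j => add_mem (hP.1 j) (hQ.1 j), by simp [mul_add, Finset.sum_add_distrib, hP.2, hQ.2]⟩
  zero_mem' := ⟨fun _ => zero_mem _, by simp⟩
  smul_mem' c P hP :=
    ⟨fun j => Submodule.smul_mem _ c (hP.1 j), by simp [← Finset.smul_sum, hP.2]⟩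

theorem koszulVec_mem_homogeneousSyzygies {n : ℕ} {B : MvPolynomial σ R}
    (hB : B.IsHomogeneous n) (i j : σ) : koszulVec i j B ∈ homogeneousSyzygies σ R (n + 1) := by
  refine ⟨fun l => ?_, ?_⟩
  · have hX (a : σ) : (B * X a).IsHomogeneous (n + 1) := hB.mul (isHomogeneous_X R a)
    simp only [koszulVec_apply, Pi.sub_apply, Pi.single_apply]
    split_ifs <;> simp_all [zero_mem]
  · simp only [koszulVec_apply, Pi.sub_apply, mul_sub, Finset.sum_sub_distrib, Pi.single_apply,
      mul_ite, mul_zero, Finset.sum_ite_eq', Finset.mem_univ, if_true]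
    ring

theorem sum_koszulVec_pderiv {k : ℕ} {P : σ → MvPolynomial σ R}
    (hP : P ∈ homogeneousSyzygies σ R k) :
    ∑ i, ∑ j, koszulVec i j (pderiv i (P j)) = (k + 1 : R) • P := by
  obtain ⟨hhom, hsyz⟩ := hP
  funext l
  have euler : ∑ i, pderiv i (P l) * X i = k • P l := by
    simpa only [mul_comm] using (hhom l).sum_X_mul_pderiv
  have hderiv : ∑ j, pderiv l (P j) * X j = -P l := by
    have := congrArg (pderiv l) hsyz
    simp only [map_sum, Derivation.leibniz, pderiv_X, Pi.single_apply, smul_eq_mul, mul_ite,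
      mul_one, mul_zero, Finset.sum_add_distrib, Finset.sum_ite_eq', Finset.mem_univ, if_true,
      map_zero] at this
    rw [← eq_neg_iff_add_eq_zero.mpr this]
    simp only [mul_comm]
  simp only [Finset.sum_apply, koszulVec_apply, Pi.sub_apply, Pi.single_apply,
    Finset.sum_sub_distrib, Finset.sum_ite_eq, Finset.mem_univ, if_true, Finset.sum_comm (γ := σ)]
  rw [euler, hderiv, Pi.smul_apply, sub_neg_eq_add, add_smul, one_smul, Nat.cast_smul_eq_nsmul]

end Koszul

theorem le_of_add_single_eq_add_single {ι : Type*} [LinearOrder ι] {m m' : ι →₀ ℕ}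
    {i' j j' : ι} (hm' : ∀ l, m' l ≠ 0 → l ≤ j') (hi' : i' ≤ j')
    (h : m' + Finsupp.single i' 1 = m + Finsupp.single j 1) : j ≤ j' := by
  have hj : (m' + Finsupp.single i' 1 : ι →₀ ℕ) j ≠ 0 := by simp [h]
  obtain rfl | hi'j := eq_or_ne i' j
  · exact hi'
  · exact hm' j (by simpa [Finsupp.single_apply, hi'j] using hj)

section Qv

variable {N k : ℕ}

theorem Qv_eq_koszulVec (m : Fin N →₀ ℕ) (i j : Fin N) :
    Qv N m i j = koszulVec i j (monomial m 1) :=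
  rfl

theorem Qv_swap (m : Fin N →₀ ℕ) (i j : Fin N) : Qv N m j i = -Qv N m i j :=
  (neg_sub _ _).symm

theorem Qv_add_single (n : Fin N →₀ ℕ) (i j l : Fin N) :
    Qv N (n + Finsupp.single l 1) i j
      = Qv N (n + Finsupp.single j 1) i l - Qv N (n + Finsupp.single i 1) j l := by
  simp only [Qv_eq_koszulVec, monomial_add_single, pow_one]
  exact koszulVec_mul_X _ _ _ _

theorem coeff_Qv_apply (m m' : Fin N →₀ ℕ) (i j l : Fin N) :
    coeff m' (Qv N m i j l)
      = (if l = j ∧ m + Finsupp.single i 1 = m' then 1 else 0)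
        - (if l = i ∧ m + Finsupp.single j 1 = m' then 1 else 0) := by
  have hX (a : Fin N) : monomial m (1 : ℝ) * X a = monomial (m + Finsupp.single a 1) 1 := by
    rw [monomial_add_single, pow_one]
  simp only [Qv, Pi.sub_apply, Pi.single_apply, coeff_sub, hX]
  split_ifs <;> simp_all [coeff_monomial]

theorem Qv_mem_homogeneousSyzygies (hk : 1 ≤ k) {m : Fin N →₀ ℕ} (hm : m.degree = k - 1)
    (i j : Fin N) : Qv N m i j ∈ homogeneousSyzygies (Fin N) ℝ k := by
  rw [← Nat.sub_add_cancel hk]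
  exact koszulVec_mem_homogeneousSyzygies (isHomogeneous_monomial _ hm) i j

theorem linearIndependent_Qv :
    LinearIndependent ℝ (fun q : BasisIdx N k => Qv N q.1.1 q.1.2.1 q.1.2.2) := by
  refine .of_pairwise_dual_eq_zero_one _
    (fun q => -(lcoeff ℝ (q.1.1 + Finsupp.single q.1.2.2 1) ∘ₗ LinearMap.proj q.1.2.1)) ?_ ?_
  · rintro ⟨⟨m, i, j⟩, _, hij, hm⟩ ⟨⟨m', i', j'⟩, _, hij', hm'⟩ hne
    simp only [LinearMap.neg_apply, LinearMap.comp_apply, LinearMap.proj_apply, lcoeff_apply,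
      coeff_Qv_apply, neg_eq_zero, sub_eq_zero]
    rw [if_neg, if_neg]
    · rintro ⟨rfl, h⟩
      obtain rfl := le_antisymm (le_of_add_single_eq_add_single hm le_rfl h.symm)
        (le_of_add_single_eq_add_single hm' le_rfl h)
      obtain rfl := add_right_cancel h
      exact hne rfl
    · rintro ⟨rfl, h⟩
      exact (le_of_add_single_eq_add_single hm' hij'.le h).not_gt hij
  · rintro ⟨⟨m, i, j⟩, -, hij, -⟩
    simp [coeff_Qv_apply, hij.ne]

theorem Qv_mem_span_basisIdx {m : Fin N →₀ ℕ} {i j : Fin N} (hij : i < j)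
    (hm : m.degree = k - 1) :
    Qv N m i j ∈ Submodule.span ℝ
      (Set.range (fun q : BasisIdx N k => Qv N q.1.1 q.1.2.1 q.1.2.2)) := by
  by_cases hmax : ∀ l, m l ≠ 0 → l ≤ j
  · exact Submodule.subset_span ⟨⟨(m, i, j), hm, hij, hmax⟩, rfl⟩
  push Not at hmax
  obtain ⟨l, hl, hjl⟩ := hmax
  obtain ⟨n, hn⟩ : ∃ n, m = n + Finsupp.single l 1 :=
    ⟨m - Finsupp.single l 1,
      (tsub_add_cancel_of_le (Finsupp.single_le_iff.2 (Nat.one_le_iff_ne_zero.2 hl))).symm⟩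
  have hdeg (a : Fin N) : (n + Finsupp.single a 1).degree = k - 1 := by simpa [hn] using hm
  rw [hn, Qv_add_single]
  exact sub_mem (Qv_mem_span_basisIdx (hij.trans hjl) (hdeg j)) (Qv_mem_span_basisIdx hjl (hdeg i))
-- each step trades a `y_l` with `l > j` for `y_i` or `y_j`, lowering `∑ₗ mₗ·l`
termination_by m.weight (fun l : Fin N => (l : ℕ))
decreasing_by
  all_goals simp only [hn, map_add, Finsupp.weight_single, smul_eq_mul]; omega

theorem Qv_mem_span_basisIdx_of_ne {m : Fin N →₀ ℕ} {i j : Fin N} (hij : i ≠ j)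
    (hm : m.degree = k - 1) :
    Qv N m i j ∈ Submodule.span ℝ
      (Set.range (fun q : BasisIdx N k => Qv N q.1.1 q.1.2.1 q.1.2.2)) := by
  rcases hij.lt_or_gt with hlt | hgt
  · exact Qv_mem_span_basisIdx hlt hm
  · rw [← neg_neg (Qv N m i j), ← Qv_swap]
    exact neg_mem (Qv_mem_span_basisIdx hgt hm)

theorem mem_span_Qv_of_mem_homogeneousSyzygies {P : Fin N → MvPolynomial (Fin N) ℝ}
    (hP : P ∈ homogeneousSyzygies (Fin N) ℝ k) :
    P ∈ Submodule.span ℝ {P | ∃ (m : Fin N →₀ ℕ) (i j : Fin N),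
      (m.sum fun _ e => e) = k - 1 ∧ i ≠ j ∧ P = Qv N m i j} := by
  set S := Submodule.span ℝ {P | ∃ (m : Fin N →₀ ℕ) (i j : Fin N),
      (m.sum fun _ e => e) = k - 1 ∧ i ≠ j ∧ P = Qv N m i j}
  have hkoszul (i j : Fin N) {B : MvPolynomial (Fin N) ℝ} (hB : B.IsHomogeneous (k - 1)) :
      koszulVec i j B ∈ S := by
    obtain rfl | hij := eq_or_ne i j
    · simp
    rw [B.as_sum, map_sum]
    refine Submodule.sum_mem _ fun m hm => ?_
    rw [← mul_one (coeff m B), ← smul_eq_mul, ← smul_monomial, map_smul]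
    refine Submodule.smul_mem _ _ (Submodule.subset_span ⟨m, i, j, ?_, hij, rfl⟩)
    exact not_imp_comm.mp hB.coeff_eq_zero (mem_support_iff.mp hm)
  have hP' : P = (k + 1 : ℝ)⁻¹ • ∑ i, ∑ j, koszulVec i j (pderiv i (P j)) := by
    rw [sum_koszulVec_pderiv hP, smul_smul, inv_mul_cancel₀ (by positivity), one_smul]
  rw [hP']
  exact Submodule.smul_mem _ _
    (Submodule.sum_mem _ fun i _ => Submodule.sum_mem _ fun j _ => hkoszul i j (hP.1 j).pderiv)

end Qv

theorem kernel_basis_general (N k : ℕ) (hk : 1 ≤ k) :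
    LinearIndependent ℝ (fun q : BasisIdx N k => Qv N q.1.1 q.1.2.1 q.1.2.2) ∧
    ((Submodule.span ℝ
        (Set.range (fun q : BasisIdx N k => Qv N q.1.1 q.1.2.1 q.1.2.2)) :
          Submodule ℝ (Fin N → MvPolynomial (Fin N) ℝ)) : Set (Fin N → MvPolynomial (Fin N) ℝ))
      = {P | (∀ j, P j ∈ homogeneousSubmodule (Fin N) ℝ k) ∧ ∑ j, X j * P j = 0} ∧
    ((Submodule.span ℝ
        {P | ∃ (m : Fin N →₀ ℕ) (i j : Fin N),
          (m.sum fun _ e => e) = k - 1 ∧ i ≠ j ∧ P = Qv N m i j} :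
          Submodule ℝ (Fin N → MvPolynomial (Fin N) ℝ)) : Set (Fin N → MvPolynomial (Fin N) ℝ))
      = {P | (∀ j, P j ∈ homogeneousSubmodule (Fin N) ℝ k) ∧ ∑ j, X j * P j = 0} := by
  set A := Submodule.span ℝ {P | ∃ (m : Fin N →₀ ℕ) (i j : Fin N),
    (m.sum fun _ e => e) = k - 1 ∧ i ≠ j ∧ P = Qv N m i j}
  set B := Submodule.span ℝ (Set.range (fun q : BasisIdx N k => Qv N q.1.1 q.1.2.1 q.1.2.2))
  have hsyz_le : homogeneousSyzygies (Fin N) ℝ k ≤ A :=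
    fun _ => mem_span_Qv_of_mem_homogeneousSyzygies
  have hA : A = homogeneousSyzygies (Fin N) ℝ k := by
    refine le_antisymm (Submodule.span_le.2 ?_) hsyz_le
    rintro _ ⟨m, i, j, hm, -, rfl⟩
    exact Qv_mem_homogeneousSyzygies hk hm i j
  have hB : B = homogeneousSyzygies (Fin N) ℝ k := by
    refine le_antisymm (Submodule.span_le.2 ?_) (hsyz_le.trans (Submodule.span_le.2 ?_))
    · rintro _ ⟨q, rfl⟩
      exact Qv_mem_homogeneousSyzygies hk q.2.1 _ _
    · rintro _ ⟨m, i, j, hm, hij, rfl⟩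
      exact Qv_mem_span_basisIdx_of_ne hij hm
  exact ⟨linearIndependent_Qv, congrArg SetLike.coe hB, congrArg SetLike.coe hA⟩

/-- the kernel of `Φ_k : (𝒫^k)^N → 𝒫^{k+1}`, `(P₁,…,P_N) ↦ ∑_j y_j·P_j`
(on tuples of homogeneous polynomials of degree `k`), has the basis `Q_{m,i,j}` indexed by
`BasisIdx N k`: this family is linearly independent and spans the kernel. In particular the
kernel is spanned by the tuples `y^m·(y_i·e_j − y_j·e_i)` over all `m` with `|m| = k−1` and
all `i ≠ j`. -/
theorem kernel_basis (N k : ℕ) (hN : 1 ≤ N) (hk : 1 ≤ k) :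
    LinearIndependent ℝ (fun q : BasisIdx N k => Qv N q.1.1 q.1.2.1 q.1.2.2) ∧
    ((Submodule.span ℝ
        (Set.range (fun q : BasisIdx N k => Qv N q.1.1 q.1.2.1 q.1.2.2)) :
          Submodule ℝ (Fin N → MvPolynomial (Fin N) ℝ)) : Set (Fin N → MvPolynomial (Fin N) ℝ))
      = {P | (∀ j, P j ∈ homogeneousSubmodule (Fin N) ℝ k) ∧ ∑ j, X j * P j = 0} ∧
    ((Submodule.span ℝ
        {P | ∃ (m : Fin N →₀ ℕ) (i j : Fin N),
          (m.sum fun _ e => e) = k - 1 ∧ i ≠ j ∧ P = Qv N m i j} :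
          Submodule ℝ (Fin N → MvPolynomial (Fin N) ℝ)) : Set (Fin N → MvPolynomial (Fin N) ℝ))
      = {P | (∀ j, P j ∈ homogeneousSubmodule (Fin N) ℝ k) ∧ ∑ j, X j * P j = 0} :=
  kernel_basis_general N k hk
end

section
/- For every integer k ≥ 0 and every homogeneous polynomial P of degree k in two variables (y₁, y₂) with real coefficients: ∫₀^{2π} P(cos θ, sin θ) dθ = 0 if and only if there exists a homogeneous polynomial Q of degree k in (y₁, y₂) such that P = y₁·∂Q/∂y₂ − y₂·∂Q/∂y₁. -/
/-!
Along the unit circle `θ ↦ (cos θ, sin θ)` the rotational derivative `D = y₁∂₂ − y₂∂₁` is the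
derivative in `θ`, so the circle integral `I` kills the image of `D`. Conversely, if `D Q = 0`
then `Q` is constant on the circle, so `I Q = 2π Q(1, 0)`; and a homogeneous polynomial vanishing
on the circle vanishes everywhere by scaling. Thus `ker D ∩ ker I = 0` on the finite-dimensional
space `V` of forms of degree `k`, so `dim ker I ≤ dim V - dim ker D = dim range D` and the
inclusion `range D ≤ ker I` is an equality.
-/

open MvPolynomial Real

theorem LinearMap.range_eq_ker_of_disjoint_ker {K V W : Type*} [DivisionRing K]
    [AddCommGroup V] [Module K V] [FiniteDimensional K V] [AddCommGroup W] [Module K W]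
    (f : V →ₗ[K] V) (g : V →ₗ[K] W) (hgf : g ∘ₗ f = 0) (hfg : Disjoint (ker f) (ker g)) :
    range f = ker g := by
  refine Submodule.eq_of_le_of_finrank_le (range_le_ker_iff.mpr hgf) ?_
  have rank_nullity := f.finrank_range_add_finrank_ker
  have kernels_independent := Submodule.finrank_add_finrank_le_of_disjoint hfg
  omega

namespace MvPolynomial

section CommSemiring

variable {σ R : Type*} [CommSemiring R] {φ : MvPolynomial σ R} {n : ℕ}

theorem IsHomogeneous.eval_smul (h : φ.IsHomogeneous n) (c : R) (x : σ → R) :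
    eval (c • x) φ = c ^ n * eval x φ := by
  rw [eval_eq, eval_eq, Finset.mul_sum]
  refine Finset.sum_congr rfl fun d hd => ?_
  have hdeg : ∑ i ∈ d.support, d i = n := by
    rw [← Finsupp.degree_apply, Finsupp.degree_eq_weight_one]
    exact h (mem_support_iff.mp hd)
  simp only [Pi.smul_apply, smul_eq_mul, mul_pow, Finset.prod_mul_distrib,
    Finset.prod_pow_eq_pow_sum, hdeg]
  ring

theorem IsHomogeneous.X_mul_pderiv (h : φ.IsHomogeneous n) (i j : σ) :
    (X j * pderiv i φ).IsHomogeneous n := by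
  cases n with
  | zero =>
    rw [← totalDegree_zero_iff_isHomogeneous, totalDegree_eq_zero_iff_eq_C] at h
    rw [h, pderiv_C, mul_zero]
    exact isHomogeneous_zero _ _ _
  | succ n => simpa [add_comm] using (isHomogeneous_X R j).mul h.pderiv

end CommSemiring

theorem hasDerivAt_eval_comp {σ 𝕜 : Type*} [Fintype σ] [NontriviallyNormedField 𝕜]
    (p : MvPolynomial σ 𝕜) {γ : 𝕜 → σ → 𝕜} {γ' : σ → 𝕜} {t : 𝕜}
    (hγ : ∀ i, HasDerivAt (fun s => γ s i) (γ' i) t) :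
    HasDerivAt (fun s => eval (γ s) p) (∑ i, eval (γ t) (pderiv i p) * γ' i) t := by
  classical
  induction p using MvPolynomial.induction_on with
  | C a => simpa using hasDerivAt_const t a
  | add p q hp hq =>
    simp only [map_add, add_mul, Finset.sum_add_distrib]
    exact hp.add hq
  | mul_X p i hp =>
    simp only [map_mul, eval_X, Derivation.leibniz, pderiv_X, smul_eq_mul]
    refine (hp.mul (hγ i)).congr_deriv ?_
    simp only [map_add, map_mul, eval_X, Pi.single_apply, apply_ite (eval _), map_zero, mul_ite,
      mul_one, mul_zero, add_mul, ite_mul, zero_mul, Finset.sum_add_distrib, Finset.sum_ite_eq,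
      Finset.mem_univ, if_true, Finset.sum_mul]
    rw [add_comm]
    exact congrArg _ (Finset.sum_congr rfl fun _ _ => by ring)

section RotDeriv

variable {R : Type*} [CommRing R]

noncomputable def rotDeriv : Derivation R (MvPolynomial (Fin 2) R) (MvPolynomial (Fin 2) R) :=
  (X 0 : MvPolynomial (Fin 2) R) • pderiv 1 - (X 1 : MvPolynomial (Fin 2) R) • pderiv 0

theorem rotDeriv_apply (Q : MvPolynomial (Fin 2) R) :
    rotDeriv Q = X 0 * pderiv 1 Q - X 1 * pderiv 0 Q := by
  simp [rotDeriv]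

theorem IsHomogeneous.rotDeriv {Q : MvPolynomial (Fin 2) R} {n : ℕ} (h : Q.IsHomogeneous n) :
    (MvPolynomial.rotDeriv Q).IsHomogeneous n :=
  rotDeriv_apply Q ▸ (h.X_mul_pderiv 1 0).sub (h.X_mul_pderiv 0 1)

end RotDeriv

section UnitCircle

variable {Q : MvPolynomial (Fin 2) ℝ}

theorem hasDerivAt_eval_cos_sin (Q : MvPolynomial (Fin 2) ℝ) (θ : ℝ) :
    HasDerivAt (fun θ => eval ![cos θ, sin θ] Q) (eval ![cos θ, sin θ] (rotDeriv Q)) θ := by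
  have hγ : ∀ i, HasDerivAt (fun s => ![cos s, sin s] i) (![-sin θ, cos θ] i) θ := by
    intro i
    fin_cases i
    · exact hasDerivAt_cos θ
    · exact hasDerivAt_sin θ
  refine (hasDerivAt_eval_comp Q hγ).congr_deriv ?_
  simp [rotDeriv_apply, Fin.sum_univ_two]
  ring

theorem continuous_eval_cos_sin (Q : MvPolynomial (Fin 2) ℝ) :
    Continuous fun θ => eval ![cos θ, sin θ] Q :=
  continuous_iff_continuousAt.mpr fun θ => (hasDerivAt_eval_cos_sin Q θ).continuousAt

theorem integral_eval_cos_sin_rotDeriv (Q : MvPolynomial (Fin 2) ℝ) :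
    ∫ θ in 0..2 * π, eval ![cos θ, sin θ] (rotDeriv Q) = 0 := by
  rw [intervalIntegral.integral_eq_sub_of_hasDerivAt (fun θ _ => hasDerivAt_eval_cos_sin Q θ)
    ((continuous_eval_cos_sin _).intervalIntegrable _ _)]
  simp

theorem eval_cos_sin_eq_of_rotDeriv_eq_zero (hQ : rotDeriv Q = 0) (θ : ℝ) :
    eval ![cos θ, sin θ] Q = eval ![1, 0] Q := by
  simpa using is_const_of_deriv_eq_zero (fun θ => (hasDerivAt_eval_cos_sin Q θ).differentiableAt)
    (fun θ => by rw [(hasDerivAt_eval_cos_sin Q θ).deriv, hQ, map_zero]) θ 0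

theorem IsHomogeneous.eq_zero_of_forall_eval_cos_sin_eq_zero {n : ℕ} (hQ : Q.IsHomogeneous n)
    (h : ∀ θ, eval ![cos θ, sin θ] Q = 0) : Q = 0 := by
  refine hQ.eq_zero_of_forall_eval_eq_zero fun x => ?_
  let z : ℂ := ⟨x 0, x 1⟩
  have hx : x = ‖z‖ • ![cos z.arg, sin z.arg] := by
    ext i
    fin_cases i
    · exact (Complex.norm_mul_cos_arg z).symm
    · exact (Complex.norm_mul_sin_arg z).symm
  rw [hx, hQ.eval_smul, h, mul_zero]

theorem IsHomogeneous.eq_zero_of_rotDeriv_eq_zero {n : ℕ} (hQ : Q.IsHomogeneous n)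
    (hD : MvPolynomial.rotDeriv Q = 0) (hI : ∫ θ in 0..2 * π, eval ![cos θ, sin θ] Q = 0) :
    Q = 0 := by
  simp only [eval_cos_sin_eq_of_rotDeriv_eq_zero hD, intervalIntegral.integral_const, sub_zero,
    smul_eq_mul, mul_eq_zero, two_pi_pos.ne', false_or] at hI
  exact hQ.eq_zero_of_forall_eval_cos_sin_eq_zero fun θ =>
    (eval_cos_sin_eq_of_rotDeriv_eq_zero hD θ).trans hI

noncomputable def unitCircleIntegral : MvPolynomial (Fin 2) ℝ →ₗ[ℝ] ℝ where
  toFun Q := ∫ θ in 0..2 * π, eval ![cos θ, sin θ] Q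
  map_add' p q := by
    simp only [map_add]
    exact intervalIntegral.integral_add ((continuous_eval_cos_sin p).intervalIntegrable _ _)
      ((continuous_eval_cos_sin q).intervalIntegrable _ _)
  map_smul' c p := by
    simp only [smul_eval, intervalIntegral.integral_const_mul, smul_eq_mul, RingHom.id_apply]

end UnitCircle

end MvPolynomial

/-- a homogeneous polynomial `P` of degree `k` in two variables has zero
integral over the unit circle if and only if it is the rotational derivative
`y₁·∂Q/∂y₂ − y₂·∂Q/∂y₁` of some homogeneous polynomial `Q` of degree `k`. -/
theorem circle_integral_zero_iff_rotational_derivative (k : ℕ)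
    (P : MvPolynomial (Fin 2) ℝ) (hP : P ∈ homogeneousSubmodule (Fin 2) ℝ k) :
    (∫ θ in (0:ℝ)..(2 * π), eval ![Real.cos θ, Real.sin θ] P) = 0 ↔
      ∃ Q : MvPolynomial (Fin 2) ℝ, Q ∈ homogeneousSubmodule (Fin 2) ℝ k ∧
        P = X 0 * pderiv 1 Q - X 1 * pderiv 0 Q := by
  let V := homogeneousSubmodule (Fin 2) ℝ k
  have : Module.Finite ℝ V := Module.Finite.iff_fg.mpr (homogeneousSubmodule_fg _ _ k)
  let D : V →ₗ[ℝ] V := rotDeriv.toLinearMap.restrict fun _ hQ => IsHomogeneous.rotDeriv hQ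
  let I : V →ₗ[ℝ] ℝ := unitCircleIntegral ∘ₗ V.subtype
  have hID : I ∘ₗ D = 0 := LinearMap.ext fun Q => integral_eval_cos_sin_rotDeriv Q
  have hdisj : Disjoint (LinearMap.ker D) (LinearMap.ker I) :=
    Submodule.disjoint_def.mpr fun Q hD hI =>
      Subtype.ext (IsHomogeneous.eq_zero_of_rotDeriv_eq_zero Q.2 (congrArg Subtype.val hD) hI)
  simp only [← rotDeriv_apply]
  calc _ ↔ ⟨P, hP⟩ ∈ LinearMap.ker I := Iff.rfl
    _ ↔ ⟨P, hP⟩ ∈ LinearMap.range D := by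
      rw [LinearMap.range_eq_ker_of_disjoint_ker D I hID hdisj]
    _ ↔ _ := ⟨fun ⟨Q, hQP⟩ => ⟨Q, Q.2, congrArg Subtype.val hQP.symm⟩,
      fun ⟨Q, hQ, hPQ⟩ => ⟨⟨Q, hQ⟩, Subtype.ext hPQ.symm⟩⟩
end

section
/- Let M be a smooth (C^∞) Hausdorff second-countable manifold and let π : E → M be a smooth real vector bundle of finite rank. Let f₁,…,f_ℓ be smooth sections of E such that for every x ∈ M the vectors f₁(x),…,f_ℓ(x) span the fiber E_x. Then every smooth section F of E can be written as F = ∑_{i=1}^{ℓ} η_i·f_i, where η₁,…,η_ℓ : M → ℝ are smooth functions. -/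
open Bundle
open scoped Manifold

section GramAux

/-- Algebraic gram-type map associated to a finite family of vectors: it sends a linear
functional `ξ` to `∑ i, ξ (v i) • v i`. -/
noncomputable def gramL {W : Type*} [AddCommGroup W] [Module ℝ W] {n : ℕ} (v : Fin n → W) :
    Module.Dual ℝ W →ₗ[ℝ] W :=
  ∑ i, (Module.Dual.eval ℝ W (v i)).smulRight (v i)

lemma gramL_apply {W : Type*} [AddCommGroup W] [Module ℝ W] {n : ℕ} (v : Fin n → W)
    (ξ : Module.Dual ℝ W) : gramL v ξ = ∑ i, ξ (v i) • v i := by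
  simp [gramL]

lemma gramL_injective {W : Type*} [AddCommGroup W] [Module ℝ W] {n : ℕ} {v : Fin n → W}
    (hv : Submodule.span ℝ (Set.range v) = ⊤) : Function.Injective (gramL v) := by
  rw [← LinearMap.ker_eq_bot, LinearMap.ker_eq_bot']
  intro ξ hξ
  rw [gramL_apply] at hξ
  have h0 : ∀ i, ξ (v i) = 0 := by
    have := congrArg ξ hξ
    simp only [map_sum, map_smul, map_zero, smul_eq_mul] at this
    intro i
    have := (Finset.sum_eq_zero_iff_of_nonneg (fun i _ => mul_self_nonneg (ξ (v i)))).mp this i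
      (Finset.mem_univ i)
    exact mul_self_eq_zero.mp this
  refine LinearMap.ext fun w => ?_
  have hw : w ∈ Submodule.span ℝ (Set.range v) := by rw [hv]; trivial
  refine Submodule.span_induction (fun y hy => ?_) (map_zero ξ) (fun a b _ _ ha hb => by
    simp [ha, hb]) (fun r a _ ha => by simp [ha]) hw
  obtain ⟨i, rfl⟩ := hy
  exact h0 i

lemma gramL_bijective {W : Type*} [AddCommGroup W] [Module ℝ W] [FiniteDimensional ℝ W]
    {n : ℕ} {v : Fin n → W} (hv : Submodule.span ℝ (Set.range v) = ⊤) :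
    Function.Bijective (gramL v) := by
  have hinj := gramL_injective hv
  refine ⟨hinj, ?_⟩
  rw [← LinearMap.injective_iff_surjective_of_finrank_eq_finrank ?_]
  · exact hinj
  · show Module.finrank ℝ (W →ₗ[ℝ] ℝ) = Module.finrank ℝ W
    rw [Module.finrank_linearMap, Module.finrank_self, mul_one]

variable {V : Type*} [NormedAddCommGroup V] [NormedSpace ℝ V]

/-- Continuous gram-type map. -/
noncomputable def gramCLM {n : ℕ} (v : Fin n → V) : (V →L[ℝ] ℝ) →L[ℝ] V :=
  ∑ i, (ContinuousLinearMap.apply ℝ ℝ (v i)).smulRight (v i)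

lemma gramCLM_apply {n : ℕ} (v : Fin n → V) (ξ : V →L[ℝ] ℝ) :
    gramCLM v ξ = ∑ i, ξ (v i) • v i := by
  simp [gramCLM]

lemma gramCLM_eq_gramL {n : ℕ} (v : Fin n → V) (ξ : V →L[ℝ] ℝ) :
    gramCLM v ξ = gramL v (ξ : V →ₗ[ℝ] ℝ) := by
  simp [gramCLM, gramL]

lemma gramCLM_bijective [FiniteDimensional ℝ V] {n : ℕ} {v : Fin n → V}
    (hv : Submodule.span ℝ (Set.range v) = ⊤) :
    Function.Bijective (gramCLM v) := by
  have h : (gramCLM v : (V →L[ℝ] ℝ) → V) =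
      (gramL v) ∘ (fun ξ : V →L[ℝ] ℝ => (ξ : V →ₗ[ℝ] ℝ)) :=
    funext fun ξ => gramCLM_eq_gramL v ξ
  rw [h]
  refine (gramL_bijective hv).comp ⟨fun a b hab => ContinuousLinearMap.coe_injective hab,
    fun ℓ => ⟨LinearMap.toContinuousLinearMap ℓ, LinearMap.coe_toContinuousLinearMap ℓ⟩⟩

set_option synthInstance.maxHeartbeats 200000 in
lemma contDiff_gram_single {k : WithTop ℕ∞} :
    ContDiff ℝ k (fun v : V => (ContinuousLinearMap.apply ℝ ℝ v).smulRight v) := by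
  have : (fun v : V => (ContinuousLinearMap.apply ℝ ℝ v).smulRight v) =
      fun v : V => ((ContinuousLinearMap.smulRightL ℝ (V →L[ℝ] ℝ) V).comp
        (ContinuousLinearMap.apply ℝ ℝ)) v v := by
    ext v ξ
    simp [ContinuousLinearMap.smulRightL]
  rw [this]
  exact (ContinuousLinearMap.contDiff _).clm_apply contDiff_id

lemma ContMDiffAt.gramCLM_comp
    {EB : Type*} [NormedAddCommGroup EB] [NormedSpace ℝ EB]
    {HB : Type*} [TopologicalSpace HB] {IB : ModelWithCorners ℝ EB HB}
    {M : Type*} [TopologicalSpace M] [ChartedSpace HB M]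
    {n : ℕ} {φ : Fin n → M → V} {x₀ : M}
    (hφ : ∀ j, ContMDiffAt IB 𝓘(ℝ, V) (⊤ : ℕ∞) (φ j) x₀) :
    ContMDiffAt IB 𝓘(ℝ, (V →L[ℝ] ℝ) →L[ℝ] V) (⊤ : ℕ∞) (fun x => gramCLM (fun j => φ j x)) x₀ := by
  have h : (fun x => gramCLM (fun j => φ j x)) = fun x =>
      ∑ j, (ContinuousLinearMap.apply ℝ ℝ (φ j x)).smulRight (φ j x) := rfl
  rw [h]
  refine contMDiffAt_finset_sum fun j _ => ?_
  exact ContDiffAt.comp_contMDiffAt (g := fun v : V =>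
    (ContinuousLinearMap.apply ℝ ℝ v).smulRight v) contDiff_gram_single.contDiffAt (hφ j)

end GramAux

/-- if `f₁,…,f_ℓ` is a generating collection of smooth sections of a smooth
finite-rank real vector bundle `E` over a smooth Hausdorff second-countable manifold `M`
(i.e. the values `f_i(x)` span each fiber `E_x`), then every smooth section `F` of `E` is a
linear combination `F = ∑ i η_i·f_i` with smooth real coefficient functions `η_i`. -/
theorem generating_sections_span_smooth_sections
    {EB : Type*} [NormedAddCommGroup EB] [NormedSpace ℝ EB]
    {HB : Type*} [TopologicalSpace HB] (IB : ModelWithCorners ℝ EB HB)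
    (M : Type*) [TopologicalSpace M] [ChartedSpace HB M] [IsManifold IB (⊤ : ℕ∞) M]
    [T2Space M] [SecondCountableTopology M]
    (F : Type*) [NormedAddCommGroup F] [NormedSpace ℝ F] [FiniteDimensional ℝ F]
    (E : M → Type*) [TopologicalSpace (TotalSpace F E)]
    [∀ x, AddCommGroup (E x)] [∀ x, Module ℝ (E x)] [∀ x, TopologicalSpace (E x)]
    [FiberBundle F E] [VectorBundle ℝ F E] [ContMDiffVectorBundle (⊤ : ℕ∞) F E IB]
    (ℓ : ℕ) (f : Fin ℓ → ∀ x, E x)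
    (hf : ∀ i, ContMDiff IB (IB.prod 𝓘(ℝ, F)) (⊤ : ℕ∞)
      (fun x => (⟨x, f i x⟩ : TotalSpace F E)))
    (hgen : ∀ x : M, Submodule.span ℝ (Set.range fun i => f i x) = (⊤ : Submodule ℝ (E x)))
    (s : ∀ x, E x)
    (hs : ContMDiff IB (IB.prod 𝓘(ℝ, F)) (⊤ : ℕ∞) (fun x => (⟨x, s x⟩ : TotalSpace F E))) :
    ∃ η : Fin ℓ → M → ℝ,
      (∀ i, ContMDiff IB 𝓘(ℝ, ℝ) (⊤ : ℕ∞) (η i)) ∧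
      ∀ x : M, s x = ∑ i, η i x • f i x := by
  classical
  haveI hFD : ∀ x : M, FiniteDimensional ℝ (E x) := fun x =>
    LinearEquiv.finiteDimensional
      ((trivializationAt F E x).continuousLinearEquivAt ℝ x
        (FiberBundle.mem_baseSet_trivializationAt F E x)).symm.toLinearEquiv
  have hGbij : ∀ x : M, Function.Bijective (gramL fun i => f i x) := fun x =>
    gramL_bijective (hgen x)
  set ξ : ∀ x : M, Module.Dual ℝ (E x) := fun x =>
    (LinearEquiv.ofBijective _ (hGbij x)).symm (s x) with hξdef
  have hGξ : ∀ x : M, gramL (fun i => f i x) (ξ x) = s x := fun x => by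
    have h := (LinearEquiv.ofBijective _ (hGbij x)).apply_symm_apply (s x)
    simpa [hξdef, LinearEquiv.ofBijective_apply] using h
  refine ⟨fun i x => ξ x (f i x), ?_, fun x => ?_⟩
  swap
  · rw [← hGξ x, gramL_apply]
  intro i x₀
  show ContMDiffAt IB 𝓘(ℝ, ℝ) (⊤ : ℕ∞) (fun x => ξ x (f i x)) x₀
  have hx₀ : x₀ ∈ (trivializationAt F E x₀).baseSet :=
    FiberBundle.mem_baseSet_trivializationAt F E x₀
  set φ : Fin ℓ → M → F := fun j x => (trivializationAt F E x₀ ⟨x, f j x⟩).2 with hφdef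
  set σf : M → F := fun x => (trivializationAt F E x₀ ⟨x, s x⟩).2 with hσdef
  have hφ : ∀ j, ContMDiffAt IB 𝓘(ℝ, F) (⊤ : ℕ∞) (φ j) x₀ := fun j =>
    (Bundle.contMDiffAt_section (s := f j) x₀).mp (hf j x₀)
  have hσs : ContMDiffAt IB 𝓘(ℝ, F) (⊤ : ℕ∞) σf x₀ :=
    (Bundle.contMDiffAt_section (s := s) x₀).mp (hs x₀)
  -- key pointwise identity on the base set of the trivialization
  have key : ∀ x, x ∈ (trivializationAt F E x₀).baseSet →
      ∃ ge : (F →L[ℝ] ℝ) ≃L[ℝ] F,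
        ((ge : (F →L[ℝ] ℝ) →L[ℝ] F) = gramCLM fun j => φ j x) ∧
        (ContinuousLinearMap.inverse (gramCLM fun j => φ j x)) (σf x) (φ i x)
          = ξ x (f i x) := by
    intro x hx
    set A := (trivializationAt F E x₀).continuousLinearEquivAt ℝ x hx with hA
    have hφA : ∀ j, φ j x = A (f j x) := fun j => rfl
    have hσA : σf x = A (s x) := rfl
    have hspan : Submodule.span ℝ (Set.range fun j => φ j x) = ⊤ := by
      have hcomp : (fun j => φ j x) = ⇑(A.toLinearEquiv.toLinearMap) ∘ fun j => f j x :=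
        funext fun j => hφA j
      rw [hcomp, Set.range_comp, Submodule.span_image, hgen x, Submodule.map_top,
        LinearEquiv.range]
    have hb : Function.Bijective (gramCLM fun j => φ j x) := gramCLM_bijective hspan
    set ge : (F →L[ℝ] ℝ) ≃L[ℝ] F :=
      (LinearEquiv.ofBijective ((gramCLM fun j => φ j x) : (F →L[ℝ] ℝ) →ₗ[ℝ] F)
        hb).toContinuousLinearEquiv with hge
    have hgecoe : (ge : (F →L[ℝ] ℝ) →L[ℝ] F) = gramCLM fun j => φ j x := by
      ext ζ; rfl
    refine ⟨ge, hgecoe, ?_⟩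
    set ξ' : F →L[ℝ] ℝ :=
      LinearMap.toContinuousLinearMap ((ξ x).comp A.symm.toLinearEquiv.toLinearMap) with hξ'
    have hξ'app : ∀ v : E x, ξ' (A v) = ξ x v := fun v => by
      simp only [hξ', LinearMap.coe_toContinuousLinearMap', LinearMap.comp_apply,
        ContinuousLinearEquiv.coe_toLinearEquiv]
      exact congrArg (ξ x) (A.symm_apply_apply v)
    have hgeξ' : ge ξ' = σf x := by
      have : ge ξ' = gramCLM (fun j => φ j x) ξ' := by rw [← hgecoe]; rfl
      rw [this, gramCLM_apply]
      have hterm : ∀ j, ξ' (φ j x) • φ j x = (ξ x (f j x)) • A (f j x) := fun j => by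
        rw [hφA j, hξ'app]
      calc ∑ j, ξ' (φ j x) • φ j x
          = ∑ j, (ξ x (f j x)) • A (f j x) := Finset.sum_congr rfl fun j _ => hterm j
        _ = A (∑ j, ξ x (f j x) • f j x) := by
            rw [map_sum]
            refine Finset.sum_congr rfl fun j _ => ?_
            rw [map_smul]
        _ = A (gramL (fun j => f j x) (ξ x)) := by rw [gramL_apply]
        _ = σf x := by rw [hGξ x, hσA]
    rw [← hgecoe, ContinuousLinearMap.inverse_equiv]
    have hsymm : ge.symm (σf x) = ξ' := by
      rw [← hgeξ', ContinuousLinearEquiv.symm_apply_apply]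
    show ge.symm (σf x) (φ i x) = ξ x (f i x)
    rw [hsymm, hφA i, hξ'app]
  obtain ⟨ge₀, hge₀, -⟩ := key x₀ hx₀
  have hg : ContMDiffAt IB 𝓘(ℝ, (F →L[ℝ] ℝ) →L[ℝ] F) (⊤ : ℕ∞)
      (fun x => gramCLM fun j => φ j x) x₀ := ContMDiffAt.gramCLM_comp hφ
  have hinv : ContMDiffAt IB 𝓘(ℝ, F →L[ℝ] (F →L[ℝ] ℝ)) (⊤ : ℕ∞)
      (fun x => ContinuousLinearMap.inverse (gramCLM fun j => φ j x)) x₀ := by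
    refine ContDiffAt.comp_contMDiffAt (g := ContinuousLinearMap.inverse) ?_ hg
    rw [← hge₀]
    exact contDiffAt_map_inverse ge₀
  have happ1 : ContMDiffAt IB 𝓘(ℝ, F →L[ℝ] ℝ) (⊤ : ℕ∞)
      (fun x => (ContinuousLinearMap.inverse (gramCLM fun j => φ j x)) (σf x)) x₀ :=
    hinv.clm_apply hσs
  have happ2 : ContMDiffAt IB 𝓘(ℝ, ℝ) (⊤ : ℕ∞)
      (fun x => (ContinuousLinearMap.inverse (gramCLM fun j => φ j x)) (σf x) (φ i x)) x₀ :=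
    happ1.clm_apply (hφ i)
  refine happ2.congr_of_eventuallyEq ?_
  filter_upwards [(trivializationAt F E x₀).open_baseSet.mem_nhds hx₀] with x hx
  obtain ⟨-, -, hval⟩ := key x hx
  exact hval.symm
end
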